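/- arXiv:0910.2829 — 6 statements merged into one kernel-verified Lean document; each statement's English description precedes it below -/
import Mathlib

section
/- If a picture p admits a strong homogeneous partition of its domain (a partition into homogeneous rectangular subdomains such that adjacent subdomains carry different labels), then this partition is unique. -/
/-- The rectangle `{x..x'} × {y..y'}` of grid positions. -/
def rect (x y x' y' : ℕ) : Set (ℕ × ℕ) :=
  {q | x ≤ q.1 ∧ q.1 ≤ x' ∧ y ≤ q.2 ∧ q.2 ≤ y'}

/-- A subdomain of the domain `{1..m} × {1..n}` of an `m×n` picture. -/
def IsSubdomain (m n : ℕ) (d : Set (ℕ × ℕ)) : Prop :=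
  ∃ x y x' y', 1 ≤ x ∧ x ≤ x' ∧ x' ≤ m ∧ 1 ≤ y ∧ y ≤ y' ∧ y' ≤ n ∧
    d = rect x y x' y'

/-- `d` is a `C`-homogeneous region of the picture `f`. -/
def Homog {A : Type*} (f : ℕ × ℕ → A) (d : Set (ℕ × ℕ)) (C : A) : Prop :=
  ∀ q ∈ d, f q = C

/-- The two rectangles are horizontally or vertically adjacent (in either order). -/
def RectAdj (d e : Set (ℕ × ℕ)) : Prop :=
  ∃ x y x' y' u v u' v',
    d = rect x y x' y' ∧ e = rect u v u' v' ∧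
    x ≤ x' ∧ y ≤ y' ∧ u ≤ u' ∧ v ≤ v' ∧
    ((v = y' + 1 ∧ u' ≥ x ∧ x' ≥ u) ∨ (u = x' + 1 ∧ v' ≥ y ∧ y' ≥ v) ∨
     (y = v' + 1 ∧ x' ≥ u ∧ u' ≥ x) ∨ (x = u' + 1 ∧ y' ≥ v ∧ v' ≥ y))

/-- `π` is a partition of the region `D` into rectangles on which `f` is constant. -/
def IsHomogPartitionOn {A : Type*} (D : Set (ℕ × ℕ)) (f : ℕ × ℕ → A)
    (π : Set (Set (ℕ × ℕ))) : Prop :=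
  (∀ d ∈ π, ∃ x y x' y', x ≤ x' ∧ y ≤ y' ∧ d = rect x y x' y') ∧
  (∀ d ∈ π, ∃ C, Homog f d C) ∧
  (⋃₀ π = D) ∧
  (∀ d ∈ π, ∀ e ∈ π, d ≠ e → d ∩ e = ∅)

/-- `π` is a homogeneous partition of the whole `m×n` picture `f`. -/
def IsHomogPartition {A : Type*} (m n : ℕ) (f : ℕ × ℕ → A)
    (π : Set (Set (ℕ × ℕ))) : Prop :=
  (∀ d ∈ π, IsSubdomain m n d) ∧ IsHomogPartitionOn (rect 1 1 m n) f π

/-- Strong: adjacent parts carry different labels. -/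
def StrongOn {A : Type*} (f : ℕ × ℕ → A) (π : Set (Set (ℕ × ℕ))) : Prop :=
  ∀ d ∈ π, ∀ e ∈ π, d ≠ e → RectAdj d e →
    ∀ C₁ C₂, Homog f d C₁ → Homog f e C₂ → C₁ ≠ C₂

/-- Regional: distinct parts carry distinct labels. -/
def RegionalOn {A : Type*} (f : ℕ × ℕ → A) (π : Set (Set (ℕ × ℕ))) : Prop :=
  ∀ d ∈ π, ∀ e ∈ π, d ≠ e →
    ∀ C₁ C₂, Homog f d C₁ → Homog f e C₂ → C₁ ≠ C₂


lemma mem_rect {x y x' y' : ℕ} {q : ℕ × ℕ} :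
    q ∈ rect x y x' y' ↔ x ≤ q.1 ∧ q.1 ≤ x' ∧ y ≤ q.2 ∧ q.2 ≤ y' := Iff.rfl

/-- A "good" rectangle through `q`: homogeneous of color `f q`, lying in the
domain, with all bordering pixels (inside the domain) of color `≠ f q`. -/
def Good {A : Type*} (f : ℕ × ℕ → A) (m n : ℕ) (q : ℕ × ℕ)
    (x y x' y' : ℕ) : Prop :=
  1 ≤ x ∧ x ≤ x' ∧ x' ≤ m ∧ 1 ≤ y ∧ y ≤ y' ∧ y' ≤ n ∧
  q ∈ rect x y x' y' ∧
  (∀ p ∈ rect x y x' y', f p = f q) ∧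
  (∀ c, y ≤ c → c ≤ y' → 1 < x → f (x - 1, c) ≠ f q) ∧
  (∀ c, y ≤ c → c ≤ y' → x' < m → f (x' + 1, c) ≠ f q) ∧
  (∀ r, x ≤ r → r ≤ x' → 1 < y → f (r, y - 1) ≠ f q) ∧
  (∀ r, x ≤ r → r ≤ x' → y' < n → f (r, y' + 1) ≠ f q)

lemma good_x_le {A : Type*} {f : ℕ × ℕ → A} {m n : ℕ} {q : ℕ × ℕ}
    {x1 y1 x1' y1' x2 y2 x2' y2' : ℕ}
    (h1 : Good f m n q x1 y1 x1' y1') (h2 : Good f m n q x2 y2 x2' y2') :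
    x1 ≤ x2 := by
  by_contra h
  push_neg at h
  obtain ⟨hx1, hxx1, hx1m, hy1, hyy1, hy1n, hq1, hhom1, htop1, -, -, -⟩ := h1
  obtain ⟨hx2, hxx2, hx2m, hy2, hyy2, hy2n, hq2, hhom2, -, -, -, -⟩ := h2
  rw [mem_rect] at hq1 hq2
  have heq : f (x1 - 1, q.2) = f q := hhom2 _ (mem_rect.mpr (by simp; omega))
  exact htop1 q.2 hq1.2.2.1 hq1.2.2.2 (by omega) heq

lemma good_x'_le {A : Type*} {f : ℕ × ℕ → A} {m n : ℕ} {q : ℕ × ℕ}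
    {x1 y1 x1' y1' x2 y2 x2' y2' : ℕ}
    (h1 : Good f m n q x1 y1 x1' y1') (h2 : Good f m n q x2 y2 x2' y2') :
    x2' ≤ x1' := by
  by_contra h
  push_neg at h
  obtain ⟨hx1, hxx1, hx1m, hy1, hyy1, hy1n, hq1, hhom1, -, hbot1, -, -⟩ := h1
  obtain ⟨hx2, hxx2, hx2m, hy2, hyy2, hy2n, hq2, hhom2, -, -, -, -⟩ := h2
  rw [mem_rect] at hq1 hq2
  have heq : f (x1' + 1, q.2) = f q := hhom2 _ (mem_rect.mpr (by simp; omega))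
  exact hbot1 q.2 hq1.2.2.1 hq1.2.2.2 (by omega) heq

lemma good_y_le {A : Type*} {f : ℕ × ℕ → A} {m n : ℕ} {q : ℕ × ℕ}
    {x1 y1 x1' y1' x2 y2 x2' y2' : ℕ}
    (h1 : Good f m n q x1 y1 x1' y1') (h2 : Good f m n q x2 y2 x2' y2') :
    y1 ≤ y2 := by
  by_contra h
  push_neg at h
  obtain ⟨hx1, hxx1, hx1m, hy1, hyy1, hy1n, hq1, hhom1, -, -, hl1, -⟩ := h1
  obtain ⟨hx2, hxx2, hx2m, hy2, hyy2, hy2n, hq2, hhom2, -, -, -, -⟩ := h2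
  rw [mem_rect] at hq1 hq2
  have heq : f (q.1, y1 - 1) = f q := hhom2 _ (mem_rect.mpr (by simp; omega))
  exact hl1 q.1 hq1.1 hq1.2.1 (by omega) heq

lemma good_y'_le {A : Type*} {f : ℕ × ℕ → A} {m n : ℕ} {q : ℕ × ℕ}
    {x1 y1 x1' y1' x2 y2 x2' y2' : ℕ}
    (h1 : Good f m n q x1 y1 x1' y1') (h2 : Good f m n q x2 y2 x2' y2') :
    y2' ≤ y1' := by
  by_contra h
  push_neg at h
  obtain ⟨hx1, hxx1, hx1m, hy1, hyy1, hy1n, hq1, hhom1, -, -, -, hr1⟩ := h1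
  obtain ⟨hx2, hxx2, hx2m, hy2, hyy2, hy2n, hq2, hhom2, -, -, -, -⟩ := h2
  rw [mem_rect] at hq1 hq2
  have heq : f (q.1, y1' + 1) = f q := hhom2 _ (mem_rect.mpr (by simp; omega))
  exact hr1 q.1 hq1.1 hq1.2.1 (by omega) heq

lemma good_eq {A : Type*} {f : ℕ × ℕ → A} {m n : ℕ} {q : ℕ × ℕ}
    {x1 y1 x1' y1' x2 y2 x2' y2' : ℕ}
    (h1 : Good f m n q x1 y1 x1' y1') (h2 : Good f m n q x2 y2 x2' y2') :
    x1 = x2 ∧ y1 = y2 ∧ x1' = x2' ∧ y1' = y2' :=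
  ⟨le_antisymm (good_x_le h1 h2) (good_x_le h2 h1),
   le_antisymm (good_y_le h1 h2) (good_y_le h2 h1),
   le_antisymm (good_x'_le h2 h1) (good_x'_le h1 h2),
   le_antisymm (good_y'_le h2 h1) (good_y'_le h1 h2)⟩

/-- Every part of a strong homogeneous partition is a `Good` rectangle through
each of its points. -/
lemma part_good {A : Type*} {m n : ℕ} {f : ℕ × ℕ → A} {π : Set (Set (ℕ × ℕ))}
    (hπ : IsHomogPartition m n f π) (hs : StrongOn f π)
    {x y x' y' : ℕ} (hx : 1 ≤ x) (hxx : x ≤ x') (hxm : x' ≤ m)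
    (hy : 1 ≤ y) (hyy : y ≤ y') (hyn : y' ≤ n)
    (hd : rect x y x' y' ∈ π) {q : ℕ × ℕ} (hq : q ∈ rect x y x' y') :
    Good f m n q x y x' y' := by
  obtain ⟨hsub, hrects, hhomog, hcover, hdisj⟩ := hπ
  obtain ⟨C, hC⟩ := hhomog _ hd
  have hqC : f q = C := hC q hq
  have hhom : ∀ p ∈ rect x y x' y', f p = f q := fun p hp =>
    (hC p hp).trans hqC.symm
  refine ⟨hx, hxx, hxm, hy, hyy, hyn, hq, hhom, ?_, ?_, ?_, ?_⟩
  · -- top frame: pixel (x-1, c)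
    intro c hc1 hc2 hx1 heq
    have hp'dom : ((x - 1 : ℕ), c) ∈ ⋃₀ π := by
      rw [hcover]; exact mem_rect.mpr (by simp; omega)
    obtain ⟨e, heπ, hpe⟩ := hp'dom
    obtain ⟨u, v, u', v', hu1, huu, hum, hv1, hvv, hvn, rfl⟩ := hsub e heπ
    have hpe2 : u ≤ x - 1 ∧ x - 1 ≤ u' ∧ v ≤ c ∧ c ≤ v' := mem_rect.mp hpe
    have hne : rect x y x' y' ≠ rect u v u' v' := by
      intro h
      have : ((x - 1 : ℕ), c) ∈ rect x y x' y' := by rw [h]; exact hpe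
      rw [mem_rect] at this; omega
    have hu' : u' = x - 1 := by
      by_contra hu'
      have hmem : ((x : ℕ), c) ∈ rect x y x' y' ∩ rect u v u' v' :=
        ⟨mem_rect.mpr (by simp; omega), mem_rect.mpr (by simp; omega)⟩
      have h0 := hdisj _ hd _ heπ hne
      exact Set.eq_empty_iff_forall_notMem.mp h0 _ hmem
    have hadj : RectAdj (rect x y x' y') (rect u v u' v') :=
      ⟨x, y, x', y', u, v, u', v', rfl, rfl, hxx, hyy, huu, hvv,
        Or.inr (Or.inr (Or.inr ⟨by omega, by omega, by omega⟩))⟩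
    obtain ⟨C', hC'⟩ := hhomog _ heπ
    exact hs _ hd _ heπ hne hadj _ _ hC hC'
      (hqC.symm.trans (heq.symm.trans (hC' _ hpe)))
  · -- bottom frame: pixel (x'+1, c)
    intro c hc1 hc2 hxm' heq
    have hp'dom : ((x' + 1 : ℕ), c) ∈ ⋃₀ π := by
      rw [hcover]; exact mem_rect.mpr (by simp; omega)
    obtain ⟨e, heπ, hpe⟩ := hp'dom
    obtain ⟨u, v, u', v', hu1, huu, hum, hv1, hvv, hvn, rfl⟩ := hsub e heπ
    have hpe2 : u ≤ x' + 1 ∧ x' + 1 ≤ u' ∧ v ≤ c ∧ c ≤ v' := mem_rect.mp hpe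
    have hne : rect x y x' y' ≠ rect u v u' v' := by
      intro h
      have : ((x' + 1 : ℕ), c) ∈ rect x y x' y' := by rw [h]; exact hpe
      rw [mem_rect] at this; omega
    have hu : u = x' + 1 := by
      by_contra hu
      have hmem : ((x' : ℕ), c) ∈ rect x y x' y' ∩ rect u v u' v' :=
        ⟨mem_rect.mpr (by simp; omega), mem_rect.mpr (by simp; omega)⟩
      have h0 := hdisj _ hd _ heπ hne
      exact Set.eq_empty_iff_forall_notMem.mp h0 _ hmem
    have hadj : RectAdj (rect x y x' y') (rect u v u' v') :=
      ⟨x, y, x', y', u, v, u', v', rfl, rfl, hxx, hyy, huu, hvv,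
        Or.inr (Or.inl ⟨hu, by omega, by omega⟩)⟩
    obtain ⟨C', hC'⟩ := hhomog _ heπ
    exact hs _ hd _ heπ hne hadj _ _ hC hC'
      (hqC.symm.trans (heq.symm.trans (hC' _ hpe)))
  · -- left frame: pixel (r, y-1)
    intro r hr1 hr2 hy1 heq
    have hp'dom : (r, (y - 1 : ℕ)) ∈ ⋃₀ π := by
      rw [hcover]; exact mem_rect.mpr (by simp; omega)
    obtain ⟨e, heπ, hpe⟩ := hp'dom
    obtain ⟨u, v, u', v', hu1, huu, hum, hv1, hvv, hvn, rfl⟩ := hsub e heπ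
    have hpe2 : u ≤ r ∧ r ≤ u' ∧ v ≤ y - 1 ∧ y - 1 ≤ v' := mem_rect.mp hpe
    have hne : rect x y x' y' ≠ rect u v u' v' := by
      intro h
      have : (r, (y - 1 : ℕ)) ∈ rect x y x' y' := by rw [h]; exact hpe
      rw [mem_rect] at this; omega
    have hv' : v' = y - 1 := by
      by_contra hv'
      have hmem : (r, (y : ℕ)) ∈ rect x y x' y' ∩ rect u v u' v' :=
        ⟨mem_rect.mpr (by simp; omega), mem_rect.mpr (by simp; omega)⟩
      have h0 := hdisj _ hd _ heπ hne
      exact Set.eq_empty_iff_forall_notMem.mp h0 _ hmem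
    have hadj : RectAdj (rect x y x' y') (rect u v u' v') :=
      ⟨x, y, x', y', u, v, u', v', rfl, rfl, hxx, hyy, huu, hvv,
        Or.inr (Or.inr (Or.inl ⟨by omega, by omega, by omega⟩))⟩
    obtain ⟨C', hC'⟩ := hhomog _ heπ
    exact hs _ hd _ heπ hne hadj _ _ hC hC'
      (hqC.symm.trans (heq.symm.trans (hC' _ hpe)))
  · -- right frame: pixel (r, y'+1)
    intro r hr1 hr2 hyn' heq
    have hp'dom : (r, (y' + 1 : ℕ)) ∈ ⋃₀ π := by
      rw [hcover]; exact mem_rect.mpr (by simp; omega)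
    obtain ⟨e, heπ, hpe⟩ := hp'dom
    obtain ⟨u, v, u', v', hu1, huu, hum, hv1, hvv, hvn, rfl⟩ := hsub e heπ
    have hpe2 : u ≤ r ∧ r ≤ u' ∧ v ≤ y' + 1 ∧ y' + 1 ≤ v' := mem_rect.mp hpe
    have hne : rect x y x' y' ≠ rect u v u' v' := by
      intro h
      have : (r, (y' + 1 : ℕ)) ∈ rect x y x' y' := by rw [h]; exact hpe
      rw [mem_rect] at this; omega
    have hv : v = y' + 1 := by
      by_contra hv
      have hmem : (r, (y' : ℕ)) ∈ rect x y x' y' ∩ rect u v u' v' :=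
        ⟨mem_rect.mpr (by simp; omega), mem_rect.mpr (by simp; omega)⟩
      have h0 := hdisj _ hd _ heπ hne
      exact Set.eq_empty_iff_forall_notMem.mp h0 _ hmem
    have hadj : RectAdj (rect x y x' y') (rect u v u' v') :=
      ⟨x, y, x', y', u, v, u', v', rfl, rfl, hxx, hyy, huu, hvv,
        Or.inl ⟨hv, by omega, by omega⟩⟩
    obtain ⟨C', hC'⟩ := hhomog _ heπ
    exact hs _ hd _ heπ hne hadj _ _ hC hC'
      (hqC.symm.trans (heq.symm.trans (hC' _ hpe)))

lemma strong_subset {A : Type*} {m n : ℕ} {f : ℕ × ℕ → A}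
    {π₁ π₂ : Set (Set (ℕ × ℕ))}
    (h₁ : IsHomogPartition m n f π₁) (hs₁ : StrongOn f π₁)
    (h₂ : IsHomogPartition m n f π₂) (hs₂ : StrongOn f π₂) :
    π₁ ⊆ π₂ := by
  intro d hd
  obtain ⟨x, y, x', y', hx, hxx, hxm, hy, hyy, hyn, rfl⟩ := h₁.1 d hd
  have hq : ((x : ℕ), y) ∈ rect x y x' y' :=
    mem_rect.mpr ⟨le_refl _, hxx, le_refl _, hyy⟩
  have hg1 := part_good h₁ hs₁ hx hxx hxm hy hyy hyn hd hq
  have hqdom : ((x : ℕ), y) ∈ ⋃₀ π₂ := by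
    rw [h₂.2.2.2.1]
    exact mem_rect.mpr ⟨hx, le_trans hxx hxm, hy, le_trans hyy hyn⟩
  obtain ⟨e, heπ, hqe⟩ := hqdom
  obtain ⟨u, v, u', v', hu, huu, hum, hv, hvv, hvn, rfl⟩ := h₂.1 e heπ
  have hg2 := part_good h₂ hs₂ hu huu hum hv hvv hvn heπ hqe
  obtain ⟨e1, e2, e3, e4⟩ := good_eq hg1 hg2
  subst e1; subst e2; subst e3; subst e4
  exact heπ

/-- If a picture admits a strong homogeneous partition of its
domain (a partition into homogeneous rectangular subdomains such that adjacent
subdomains carry different labels), then this partition is unique. -/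
theorem strong_homogeneous_partition_unique {A : Type*} {m n : ℕ}
    (hm : 1 ≤ m) (hn : 1 ≤ n) (f : ℕ × ℕ → A)
    (π₁ π₂ : Set (Set (ℕ × ℕ)))
    (h₁ : IsHomogPartition m n f π₁) (hs₁ : StrongOn f π₁)
    (h₂ : IsHomogPartition m n f π₂) (hs₂ : StrongOn f π₂) :
    π₁ = π₂ := by
  exact Set.Subset.antisymm (strong_subset h₁ hs₁ h₂ hs₂) (strong_subset h₂ hs₂ h₁ hs₁)
end

section
/- In a regional picture (one admitting a partition into homogeneous rectangles with pairwise distinct labels), every 2×2 subblock (tile) of the picture has one of the following shapes up to rotation: all four pixels equal; top row equal to one symbol and bottom row equal to a different symbol; top row one symbol and bottom row two distinct symbols all three different; or four pairwise distinct symbols. In particular no tile of a regional picture is 'concave', i.e., of the form with three pixels equal to B and one pixel equal to C ≠ B. -/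
/-- The picture `f` of size `m×n` is regional: it admits a homogeneous
partition with pairwise distinct labels. -/
def IsRegionalPictureFun {A : Type*} (m n : ℕ) (f : ℕ × ℕ → A) : Prop :=
  ∃ π, IsHomogPartition m n f π ∧ RegionalOn f π

/-- A 2×2 tile with top-left `a`, top-right `b`, bottom-left `c`,
bottom-right `d` is concave: three pixels equal to some `B`,
the remaining one different. -/
def ConcaveTile {A : Type*} (a b c d : A) : Prop :=
  (a = b ∧ a = c ∧ a ≠ d) ∨ (a = b ∧ a = d ∧ a ≠ c) ∨
  (a = c ∧ a = d ∧ a ≠ b) ∨ (b = c ∧ b = d ∧ b ≠ a)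

/-- The admissible tile shapes in a regional picture, up to rotation:
all equal; two homogeneous rows (or columns) with different symbols;
one homogeneous row (or column) and two further symbols, all three distinct;
four pairwise distinct symbols. -/
def RegionalTileShape {A : Type*} (a b c d : A) : Prop :=
  (a = b ∧ b = c ∧ c = d) ∨
  (a = b ∧ c = d ∧ a ≠ c) ∨
  (a = c ∧ b = d ∧ a ≠ b) ∨
  (a = b ∧ a ≠ c ∧ a ≠ d ∧ c ≠ d) ∨
  (c = d ∧ c ≠ a ∧ c ≠ b ∧ a ≠ b) ∨
  (a = c ∧ a ≠ b ∧ a ≠ d ∧ b ≠ d) ∨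
  (b = d ∧ b ≠ a ∧ b ≠ c ∧ a ≠ c) ∨
  (a ≠ b ∧ a ≠ c ∧ a ≠ d ∧ b ≠ c ∧ b ≠ d ∧ c ≠ d)

/-- In a regional picture, every 2×2 subblock has one of the
admissible shapes up to rotation; in particular no tile of a regional picture
is concave. -/
theorem regional_picture_tiles {A : Type*} {m n : ℕ} (f : ℕ × ℕ → A)
    (hreg : IsRegionalPictureFun m n f)
    (i j : ℕ) (hi1 : 1 ≤ i) (hi2 : i + 1 ≤ m) (hj1 : 1 ≤ j) (hj2 : j + 1 ≤ n) :
    RegionalTileShape (f (i, j)) (f (i, j + 1)) (f (i + 1, j)) (f (i + 1, j + 1)) ∧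
    ¬ ConcaveTile (f (i, j)) (f (i, j + 1)) (f (i + 1, j)) (f (i + 1, j + 1)) := by
  classical
  obtain ⟨π, ⟨hsub, hrect, hhom, hcover, hdisj⟩, hregl⟩ := hreg
  have key : ∀ p q : ℕ × ℕ, p ∈ rect 1 1 m n → q ∈ rect 1 1 m n → f p = f q →
      ∃ d ∈ π, p ∈ d ∧ q ∈ d := by
    intro p q hp hq hpq
    rw [← hcover] at hp hq
    obtain ⟨d, hd, hpd⟩ := hp
    obtain ⟨e, he, hqe⟩ := hq
    by_cases hde : d = e
    · exact ⟨d, hd, hpd, hde ▸ hqe⟩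
    · obtain ⟨C₁, hC₁⟩ := hhom d hd
      obtain ⟨C₂, hC₂⟩ := hhom e he
      have : C₁ = C₂ := by rw [← hC₁ p hpd, ← hC₂ q hqe, hpq]
      exact absurd this (hregl d hd e he hde C₁ C₂ hC₁ hC₂)
  have m1 : (i, j) ∈ rect 1 1 m n := by simp [rect]; omega
  have m2 : (i, j + 1) ∈ rect 1 1 m n := by simp [rect]; omega
  have m3 : (i + 1, j) ∈ rect 1 1 m n := by simp [rect]; omega
  have m4 : (i + 1, j + 1) ∈ rect 1 1 m n := by simp [rect]; omega
  have square : ∀ x y x' y' : ℕ,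
      (((i,j) ∈ rect x y x' y' ∧ (i+1,j+1) ∈ rect x y x' y') ∨
       ((i,j+1) ∈ rect x y x' y' ∧ (i+1,j) ∈ rect x y x' y')) →
      ((i,j) ∈ rect x y x' y' ∧ (i,j+1) ∈ rect x y x' y' ∧
       (i+1,j) ∈ rect x y x' y' ∧ (i+1,j+1) ∈ rect x y x' y') := by
    intro x y x' y' h
    simp only [rect, Set.mem_setOf_eq] at h ⊢
    rcases h with ⟨h1, h2⟩ | ⟨h1, h2⟩ <;>
      refine ⟨⟨?_,?_,?_,?_⟩,⟨?_,?_,?_,?_⟩,⟨?_,?_,?_,?_⟩,⟨?_,?_,?_,?_⟩⟩ <;> omega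
  have allEq : ∀ d ∈ π, (i,j) ∈ d → (i,j+1) ∈ d → (i+1,j) ∈ d → (i+1,j+1) ∈ d →
      f (i,j) = f (i,j+1) ∧ f (i,j) = f (i+1,j) ∧ f (i,j) = f (i+1,j+1) := by
    intro d hd h1 h2 h3 h4
    obtain ⟨C, hC⟩ := hhom d hd
    rw [hC _ h1, hC _ h2, hC _ h3, hC _ h4]
    exact ⟨rfl, rfl, rfl⟩
  have hdiag : f (i,j) = f (i+1,j+1) →
      f (i,j) = f (i,j+1) ∧ f (i,j) = f (i+1,j) ∧ f (i,j) = f (i+1,j+1) := by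
    intro h
    obtain ⟨d, hd, hp, hq⟩ := key _ _ m1 m4 h
    obtain ⟨x, y, x', y', _, _, hdr⟩ := hrect d hd
    subst hdr
    obtain ⟨h1, h2, h3, h4⟩ := square x y x' y' (Or.inl ⟨hp, hq⟩)
    exact allEq _ hd h1 h2 h3 h4
  have hanti : f (i,j+1) = f (i+1,j) →
      f (i,j) = f (i,j+1) ∧ f (i,j) = f (i+1,j) ∧ f (i,j) = f (i+1,j+1) := by
    intro h
    obtain ⟨d, hd, hp, hq⟩ := key _ _ m2 m3 h
    obtain ⟨x, y, x', y', _, _, hdr⟩ := hrect d hd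
    subst hdr
    obtain ⟨h1, h2, h3, h4⟩ := square x y x' y' (Or.inr ⟨hp, hq⟩)
    exact allEq _ hd h1 h2 h3 h4
  have htri : f (i,j) = f (i,j+1) → f (i,j) = f (i+1,j) → f (i,j) = f (i+1,j+1) := by
    intro hab hac
    obtain ⟨d, hd, hp, hq⟩ := key _ _ m1 m2 hab
    obtain ⟨e, he, hp', hq'⟩ := key _ _ m1 m3 hac
    have hde : d = e := by
      by_contra hne
      have := hdisj d hd e he hne
      exact absurd this (by intro hemp; exact absurd (Set.mem_inter hp hp') (by rw [hemp]; simp))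
    subst hde
    obtain ⟨x, y, x', y', _, _, hdr⟩ := hrect d hd
    subst hdr
    obtain ⟨C, hC⟩ := hhom _ hd
    have h4 : (i+1,j+1) ∈ rect x y x' y' := by
      simp only [rect, Set.mem_setOf_eq] at hp hq hq' ⊢
      refine ⟨?_, ?_, ?_, ?_⟩ <;> omega
    rw [hC _ hp, hC _ h4]
  set a := f (i, j)
  set b := f (i, j + 1)
  set c := f (i + 1, j)
  set d := f (i + 1, j + 1)
  unfold RegionalTileShape ConcaveTile
  by_cases had : a = d
  · obtain ⟨h1, h2, h3⟩ := hdiag had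
    constructor
    · exact Or.inl ⟨h1, h1 ▸ h2, h2 ▸ h3⟩
    · rintro (⟨_, _, h⟩ | ⟨_, _, h⟩ | ⟨_, _, h⟩ | ⟨_, _, h⟩)
      · exact h h3
      · exact h h2
      · exact h h1
      · exact h h1.symm
  · have hbc : b ≠ c := fun h => had (hanti h).2.2
    constructor
    · by_cases hab : a = b <;> by_cases hcd : c = d
      · exact Or.inr (Or.inl ⟨hab, hcd, fun h => had (h.trans hcd)⟩)
      · have hac : a ≠ c := fun h => hcd (h.symm.trans (htri hab h))
        exact Or.inr (Or.inr (Or.inr (Or.inl ⟨hab, hac, had, hcd⟩)))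
      · exact Or.inr (Or.inr (Or.inr (Or.inr (Or.inl
          ⟨hcd, fun h => had (h.symm.trans hcd), fun h => hbc h.symm, hab⟩))))
      · by_cases hac : a = c
        · by_cases hbd : b = d
          · exact Or.inr (Or.inr (Or.inl ⟨hac, hbd, hab⟩))
          · exact Or.inr (Or.inr (Or.inr (Or.inr (Or.inr (Or.inl ⟨hac, hab, had, hbd⟩)))))
        · by_cases hbd : b = d
          · exact Or.inr (Or.inr (Or.inr (Or.inr (Or.inr (Or.inr (Or.inl ⟨hbd, fun h => hab h.symm, hbc, hac⟩))))))
          · exact Or.inr (Or.inr (Or.inr (Or.inr (Or.inr (Or.inr (Or.inr ⟨hab, hac, had, hbc, hbd, hcd⟩))))))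
    · rintro (⟨h1, h2, h3⟩ | ⟨h1, h2, h3⟩ | ⟨h1, h2, h3⟩ | ⟨h1, h2, h3⟩)
      · exact h3 (htri h1 h2)
      · exact had h2
      · exact had h2
      · exact hbc h1
end

section
/- Let p be a picture over Σ and θ the set of all tiles of the bordered picture p̂. Then p̂ is regional if and only if the incidence graphs of both adjacency relations A_θ ∩ Σ² and A'_θ ∩ Σ² are acyclic, where A_θ = H_θ ∪ V_θ and A'_θ = H_θ⁻¹ ∪ V_θ, with H_θ relating x to y when some tile of θ has a row (x,y) with x ≠ y, and V_θ relating x to y when some tile has a column (x,y)ᵀ with x ≠ y. -/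
/-- A (nonempty) picture over alphabet `A`. -/
structure Pic (A : Type*) where
  rows : ℕ
  cols : ℕ
  rows_pos : 0 < rows
  cols_pos : 0 < cols
  val : Fin rows → Fin cols → A

/-- A tile: a 2×2 picture over `A ∪ {#}`; `none` plays the role of the border
symbol `#`.  Components: (top-left, top-right, bottom-left, bottom-right). -/
abbrev Tile (A : Type*) := Option A × Option A × Option A × Option A

/-- Pixel of the bordered picture `p̂`, with 1-based coordinates
`0 ≤ i ≤ rows+1`, `0 ≤ j ≤ cols+1`; the border carries `none` (i.e. `#`). -/
def Pic.bval {A : Type*} (p : Pic A) (i j : ℕ) : Option A :=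
  if h : 1 ≤ i ∧ i ≤ p.rows ∧ 1 ≤ j ∧ j ≤ p.cols then
    some (p.val ⟨i - 1, by omega⟩ ⟨j - 1, by omega⟩)
  else none

/-- The set `⟦p̂⟧` of all 2×2 subblocks of the bordered picture `p̂`. -/
def Pic.tiles {A : Type*} (p : Pic A) : Set (Tile A) :=
  {t | ∃ i j, i ≤ p.rows ∧ j ≤ p.cols ∧
    t = (p.bval i j, p.bval i (j + 1), p.bval (i + 1) j, p.bval (i + 1) (j + 1))}

/-- The local language defined by a tile set `θ`. -/
def LOC {A : Type*} (θ : Set (Tile A)) : Set (Pic A) :=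
  {p | p.tiles ⊆ θ}

/-- Horizontal adjacency relation `H_θ` extracted from a tile set. -/
def Hrel {A : Type*} (θ : Set (Tile A)) (x y : Option A) : Prop :=
  x ≠ y ∧ ∃ t ∈ θ, (t.1 = x ∧ t.2.1 = y) ∨ (t.2.2.1 = x ∧ t.2.2.2 = y)

/-- Vertical adjacency relation `V_θ` extracted from a tile set. -/
def Vrel {A : Type*} (θ : Set (Tile A)) (x y : Option A) : Prop :=
  x ≠ y ∧ ∃ t ∈ θ, (t.1 = x ∧ t.2.2.1 = y) ∨ (t.2.1 = x ∧ t.2.2.2 = y)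

/-- `A_θ ∩ Σ² = (H_θ ∪ V_θ) ∩ Σ²`. -/
def Arel {A : Type*} (θ : Set (Tile A)) (a b : A) : Prop :=
  Hrel θ (some a) (some b) ∨ Vrel θ (some a) (some b)

/-- `A'_θ ∩ Σ² = (H_θ⁻¹ ∪ V_θ) ∩ Σ²`. -/
def A'rel {A : Type*} (θ : Set (Tile A)) (a b : A) : Prop :=
  Hrel θ (some b) (some a) ∨ Vrel θ (some a) (some b)

/-- The incidence graph of a relation is acyclic: no directed cycle. -/
def RelAcyclic {α : Type*} (r : α → α → Prop) : Prop :=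
  ∀ a, ¬ Relation.TransGen r a a

/-- A tile set is simple regional: the incidence graphs of both adjacency
relations `A_θ ∩ Σ²` and `A'_θ ∩ Σ²` are acyclic. -/
def SimpleRegional {A : Type*} (θ : Set (Tile A)) : Prop :=
  RelAcyclic (Arel θ) ∧ RelAcyclic (A'rel θ)

/-- The picture `p` (equivalently its bordered version `p̂`) is regional: it
admits a homogeneous partition into rectangles with pairwise distinct labels. -/
def Pic.IsRegional {A : Type*} (p : Pic A) : Prop :=
  ∃ π, IsHomogPartition p.rows p.cols (fun q => p.bval q.1 q.2) π ∧
    RegionalOn (fun q => p.bval q.1 q.2) π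

open Relation Set OrderDual

section Bypass

variable {α β : Type*} [LinearOrder β]

def Bypassable (R : α → α → Prop) (key : α → β) : Prop :=
  ∀ a b c, R a b → R b c → key a ≤ key b → key c ≤ key b →
    key a < key b ∧ key c < key b ∧ (R a c ∨ ∃ d, key d < key b ∧ R a d ∧ R d c)

variable {R : α → α → Prop} {key : α → β}

theorem Relation.ReflTransGen.target_of_and {p : α → Prop} {u v : α}
    (h : ReflTransGen (fun x y => R x y ∧ p y) u v) (hu : p u) : p v := by
  rcases h.cases_tail with rfl | ⟨_, _, -, hv⟩
  exacts [hu, hv]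

theorem Relation.TransGen.target_of_and {p : α → Prop} {u v : α}
    (h : TransGen (fun x y => R x y ∧ p y) u v) : p v :=
  (TransGen.tail'_iff.1 h).choose_spec.2.2

theorem Relation.TransGen.exists_key_le {S : α → α → Prop} {u v : α} (h : TransGen S u v) :
    ∃ z, (∃ w, S w z) ∧ TransGen (fun x y => S x y ∧ key y ≤ key z) u v := by
  induction h with
  | @single v huv => exact ⟨v, ⟨u, huv⟩, .single ⟨huv, le_rfl⟩⟩
  | @tail w v _ hwv ih =>
    obtain ⟨z, hz, huw⟩ := ih
    rcases le_total (key v) (key z) with hvz | hzv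
    · exact ⟨z, hz, huw.tail ⟨hwv, hvz⟩⟩
    · refine ⟨v, ⟨w, hwv⟩, .tail ?_ ⟨hwv, le_rfl⟩⟩
      exact TransGen.mono (fun _ _ h => ⟨h.1, h.2.trans hzv⟩) _ _ huw

namespace Bypassable

theorem bypass (hR : Bypassable R key) {a b c : α} {k : β} (hab : R a b) (hbc : R b c)
    (ha : key a ≤ k) (hb : key b = k) (hc : key c ≤ k) :
    key a < k ∧ key c < k ∧ TransGen (fun x y => R x y ∧ key y < k) a c := by
  subst hb
  obtain ⟨ha, hc, hac | ⟨d, hd, had, hdc⟩⟩ := hR a b c hab hbc ha hc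
  · exact ⟨ha, hc, .single ⟨hac, hc⟩⟩
  · exact ⟨ha, hc, .tail (.single ⟨had, hd⟩) ⟨hdc, hc⟩⟩

theorem reflTransGen_lt (hR : Bypassable R key) {u v : α} {k : β} (hu : key u < k)
    (h : ReflTransGen (fun x y => R x y ∧ key y ≤ k) u v) :
    ReflTransGen (fun x y => R x y ∧ key y < k) u v ∨
      key v = k ∧ ∃ w, ReflTransGen (fun x y => R x y ∧ key y < k) u w ∧ R w v := by
  induction h with
  | refl => exact .inl .refl
  | @tail w v _ hwv ih =>
    rcases ih with huw | ⟨hw, w₀, huw₀, hw₀w⟩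
    · rcases hwv.2.lt_or_eq with hv | hv
      · exact .inl (huw.tail ⟨hwv.1, hv⟩)
      · exact .inr ⟨hv, w, huw, hwv.1⟩
    · have hw₀ := huw₀.target_of_and (p := (key · < k)) hu
      exact .inl (huw₀.trans (hR.bypass hw₀w hwv.1 hw₀.le hw hwv.2).2.2.to_reflTransGen)

theorem exists_transGen_lt (hR : Bypassable R key) {x : α} {k : β}
    (h : TransGen (fun x y => R x y ∧ key y ≤ k) x x) :
    ∃ y, TransGen (fun x y => R x y ∧ key y < k) y y := by
  rcases (h.target_of_and (p := (key · ≤ k))).lt_or_eq with hx | hx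
  · obtain ⟨w, hxw, hwx, -⟩ := TransGen.tail'_iff.1 h
    rcases hR.reflTransGen_lt hx hxw with hxw | ⟨hw, w₀, hxw₀, hw₀w⟩
    · exact ⟨x, .tail' hxw ⟨hwx, hx⟩⟩
    · have hw₀ := hxw₀.target_of_and (p := (key · < k)) hx
      exact ⟨x, TransGen.trans_right hxw₀ (hR.bypass hw₀w hwx hw₀.le hw hx.le).2.2⟩
  · obtain ⟨y, ⟨hxy, hy⟩, hyx⟩ := TransGen.head'_iff.1 h
    rcases hyx.cases_tail with rfl | ⟨w, hyw, hwx, -⟩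
    · exact absurd hx (hR.bypass hxy hxy hy hx hy).1.ne
    · obtain ⟨hw, hy, hwy⟩ :=
        hR.bypass hwx hxy (hyw.target_of_and (p := (key · ≤ k)) hy) hx hy
      rcases hR.reflTransGen_lt hy hyw with hyw | ⟨hw', -⟩
      · exact ⟨w, hwy.trans_left hyw⟩
      · exact absurd hw' hw.ne

theorem not_transGen [WellFoundedLT β] (hR : Bypassable R key) (x : α) : ¬ TransGen R x x := by
  suffices h : ∀ k x, ¬ TransGen (fun x y => R x y ∧ key y ≤ k) x x by
    intro hx
    obtain ⟨z, -, hz⟩ := hx.exists_key_le (key := key)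
    exact h _ _ hz
  intro k
  induction k using WellFoundedLT.induction with
  | _ k ih =>
    intro x hx
    obtain ⟨y, hy⟩ := hR.exists_transGen_lt hx
    obtain ⟨z, ⟨w, -, hz⟩, hyz⟩ := hy.exists_key_le (key := key)
    exact ih _ hz y (TransGen.mono (fun _ _ h => ⟨h.1.1, h.2⟩) _ _ hyz)

end Bypassable

end Bypass

section Grid

variable {ι κ α : Type*} [LinearOrder ι] [LinearOrder κ]

def CoverStep (f : ι × κ → α) (a b : α) : Prop :=
  a ≠ b ∧ ∃ u v, u ⋖ v ∧ f u = a ∧ f v = b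

theorem coverStep_iff {f : ι × κ → α} {a b : α} :
    CoverStep f a b ↔ a ≠ b ∧
      ∃ u v : ι × κ, (u.1 ⋖ v.1 ∧ u.2 = v.2 ∨ u.2 ⋖ v.2 ∧ u.1 = v.1) ∧ f u = a ∧ f v = b := by
  simp only [CoverStep, Prod.covBy_iff]

theorem coverStep_comp_ofDual_iff {f : ι × κ → α} {a b : α} :
    CoverStep (f ∘ Prod.map id ofDual) a b ↔ a ≠ b ∧
      ∃ u v : ι × κ, (u.1 ⋖ v.1 ∧ u.2 = v.2 ∨ v.2 ⋖ u.2 ∧ u.1 = v.1) ∧ f u = a ∧ f v = b := by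
  simp [CoverStep, Prod.covBy_iff, Prod.exists, OrderDual.exists]

/-- Quantified over cells, not labels: the empty level set of an unused label need not be an
interval. -/
def HasRectLevels (f : ι × κ → α) : Prop :=
  ∀ q, ∃ lo hi, f ⁻¹' {f q} = Icc lo hi

theorem HasRectLevels.comp_ofDual {f : ι × κ → α} (hf : HasRectLevels f) :
    HasRectLevels (f ∘ Prod.map id ofDual) := by
  intro q
  obtain ⟨lo, hi, h⟩ := hf (Prod.map id ofDual q)
  refine ⟨(lo.1, toDual hi.2), (hi.1, toDual lo.2), ?_⟩
  rw [preimage_comp, Function.comp_apply, h]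
  ext ⟨i, j⟩
  simp only [mem_preimage, Prod.map_apply, id_eq, mem_Icc, Prod.le_def, le_toDual, toDual_le]
  tauto

section FromAcyclic

variable [LocallyFiniteOrder ι] [LocallyFiniteOrder κ]

theorem reflTransGen_coverStep_of_le (f : ι × κ → α) {u v : ι × κ} (h : u ≤ v) :
    ReflTransGen (CoverStep f) (f u) (f v) := by
  refine ReflTransGen.lift' f (fun u v huv => ?_) u v (le_iff_reflTransGen_covBy.1 h)
  by_cases huv' : f u = f v
  · simp only [Function.onFun, huv', ReflTransGen.refl]
  · exact .single ⟨huv', u, v, huv, rfl, rfl⟩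

theorem RelAcyclic.ordConnected_preimage {f : ι × κ → α} (hf : RelAcyclic (CoverStep f))
    (a : α) : (f ⁻¹' {a}).OrdConnected := by
  refine ⟨fun u (hu : f u = a) v (hv : f v = a) z hz => ?_⟩
  by_contra hza
  have huz := reflTransGen_coverStep_of_le f hz.1
  have hzv := reflTransGen_coverStep_of_le f hz.2
  rw [hu] at huz
  rw [hv] at hzv
  rcases reflTransGen_iff_eq_or_transGen.1 huz with h | h
  · exact hza h
  · exact hf a (h.trans_left hzv)

end FromAcyclic

theorem mem_of_ordConnected_of_mem_uIcc {S : Set (ι × κ)} (h₁ : S.OrdConnected)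
    (h₂ : (Prod.map id ofDual ⁻¹' S : Set (ι × κᵒᵈ)).OrdConnected) {s t z : ι × κ}
    (hs : s ∈ S) (ht : t ∈ S) (hz₁ : z.1 ∈ uIcc s.1 t.1) (hz₂ : z.2 ∈ uIcc s.2 t.2) :
    z ∈ S := by
  wlog hst : s.1 ≤ t.1 generalizing s t
  · exact this ht hs (uIcc_comm s.1 t.1 ▸ hz₁) (uIcc_comm s.2 t.2 ▸ hz₂) (le_of_not_ge hst)
  rw [uIcc_of_le hst] at hz₁
  rcases le_total s.2 t.2 with hst' | hts'
  · rw [uIcc_of_le hst'] at hz₂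
    exact h₁.out hs ht ⟨⟨hz₁.1, hz₂.1⟩, ⟨hz₁.2, hz₂.2⟩⟩
  · rw [uIcc_of_ge hts'] at hz₂
    exact h₂.out (show (s.1, toDual s.2) ∈ _ from hs) (show (t.1, toDual t.2) ∈ _ from ht)
      (show (z.1, toDual z.2) ∈ Icc _ _ from ⟨⟨hz₁.1, hz₂.2⟩, ⟨hz₁.2, hz₂.1⟩⟩)

theorem exists_eq_Icc_of_ordConnected [Finite ι] [Finite κ] {S : Set (ι × κ)}
    (hS : S.Nonempty) (h₁ : S.OrdConnected)
    (h₂ : (Prod.map id ofDual ⁻¹' S : Set (ι × κᵒᵈ)).OrdConnected) : ∃ lo hi, S = Icc lo hi := by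
  obtain ⟨s₁, hs₁, h₁₁⟩ := S.exists_min_image Prod.fst S.toFinite hS
  obtain ⟨s₂, hs₂, h₂₂⟩ := S.exists_max_image Prod.fst S.toFinite hS
  obtain ⟨s₃, hs₃, h₃₃⟩ := S.exists_min_image Prod.snd S.toFinite hS
  obtain ⟨s₄, hs₄, h₄₄⟩ := S.exists_max_image Prod.snd S.toFinite hS
  refine ⟨(s₁.1, s₃.2), (s₂.1, s₄.2), Subset.antisymm
    (fun s hs => ⟨⟨h₁₁ s hs, h₃₃ s hs⟩, ⟨h₂₂ s hs, h₄₄ s hs⟩⟩) fun z ⟨hlo, hhi⟩ => ?_⟩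
  have mem : ∀ {s t z : ι × κ}, s ∈ S → t ∈ S → z.1 ∈ uIcc s.1 t.1 → z.2 ∈ uIcc s.2 t.2 →
      z ∈ S :=
    mem_of_ordConnected_of_mem_uIcc h₁ h₂
  have hz₁ : (z.1, s₁.2) ∈ S := mem hs₁ hs₂ (mem_uIcc_of_le hlo.1 hhi.1) left_mem_uIcc
  have hz₃ : (z.1, s₃.2) ∈ S := mem hz₁ hs₃ left_mem_uIcc right_mem_uIcc
  have hz₄ : (z.1, s₄.2) ∈ S := mem hz₁ hs₄ left_mem_uIcc right_mem_uIcc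
  exact mem hz₃ hz₄ left_mem_uIcc (mem_uIcc_of_le hlo.2 hhi.2)

theorem hasRectLevels_of_relAcyclic [Finite ι] [Finite κ] [LocallyFiniteOrder ι]
    [LocallyFiniteOrder κ] {f : ι × κ → α} (hf : RelAcyclic (CoverStep f))
    (hf' : RelAcyclic (CoverStep (f ∘ Prod.map id ofDual))) : HasRectLevels f := fun q =>
  exists_eq_Icc_of_ordConnected ⟨q, rfl⟩ (hf.ordConnected_preimage _) (hf'.ordConnected_preimage _)

/-- `[lo a, hi a]` lies strictly left of `[lo b, hi b]` sharing a row, or strictly above it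
sharing a column (the first coordinate is the row). -/
def RectBefore (lo hi : α → ι × κ) (a b : α) : Prop :=
  ((lo a).1 ≤ (hi b).1 ∧ (lo b).1 ≤ (hi a).1 ∧ (hi a).2 < (lo b).2) ∨
  ((lo a).2 ≤ (hi b).2 ∧ (lo b).2 ≤ (hi a).2 ∧ (hi a).1 < (lo b).1)

theorem RectBefore.below_of_key_le {lo hi : α → ι × κ} {b c : α}
    (hbc : RectBefore lo hi b c) (hb : lo b ≤ hi b)
    (hk : toLex ((lo c).2, (lo c).1) ≤ toLex ((lo b).2, (lo b).1)) :
    (lo c).2 < (lo b).2 ∧ (lo b).2 ≤ (hi c).2 ∧ (hi b).1 < (lo c).1 := by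
  obtain ⟨hb₁, hb₂⟩ := hb
  simp only [Prod.Lex.le_iff, ofLex_toLex] at hk
  rcases hbc with ⟨-, -, h₁⟩ | ⟨h₁, -, h₃⟩
  · exfalso
    rcases hk with hk | ⟨hk, -⟩ <;> order
  · rcases hk with hk | ⟨hk, hk'⟩
    · exact ⟨hk, h₁, h₃⟩
    · exfalso
      order

def IsLevelRects (f : ι × κ → α) (lo hi : α → ι × κ) : Prop :=
  ∀ q, f ⁻¹' {f q} = Icc (lo (f q)) (hi (f q))

namespace IsLevelRects

variable {f : ι × κ → α} {lo hi : α → ι × κ}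

theorem mem (h : IsLevelRects f lo hi) (q : ι × κ) : q ∈ Icc (lo (f q)) (hi (f q)) :=
  h q ▸ rfl

theorem eq_of_mem (h : IsLevelRects f lo hi) {q z : ι × κ}
    (hz : z ∈ Icc (lo (f q)) (hi (f q))) : f z = f q := by
  rw [← h q] at hz
  exact hz

theorem rectBefore_of_coverStep (h : IsLevelRects f lo hi) {a b : α} (hab : CoverStep f a b) :
    a ∈ range f ∧ b ∈ range f ∧ RectBefore lo hi a b := by
  obtain ⟨hab, u, v, huv, rfl, rfl⟩ := hab
  obtain ⟨⟨hu₁, hu₂⟩, ⟨hu₃, hu₄⟩⟩ := h.mem u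
  obtain ⟨⟨hv₁, hv₂⟩, ⟨hv₃, hv₄⟩⟩ := h.mem v
  have hu : u ∉ Icc (lo (f v)) (hi (f v)) := fun h' => hab (h.eq_of_mem h')
  have hv : v ∉ Icc (lo (f u)) (hi (f u)) := fun h' => hab (h.eq_of_mem h').symm
  refine ⟨⟨u, rfl⟩, ⟨v, rfl⟩, ?_⟩
  rcases Prod.covBy_iff.1 huv with ⟨h₁, h₂⟩ | ⟨h₁, h₂⟩
  · have ha : (hi (f u)).1 < v.1 := lt_of_not_ge fun h =>
      hv ⟨⟨hu₁.trans h₁.le, h₂ ▸ hu₂⟩, ⟨h, h₂ ▸ hu₄⟩⟩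
    have hb : u.1 < (lo (f v)).1 := lt_of_not_ge fun h =>
      hu ⟨⟨h, h₂ ▸ hv₂⟩, ⟨h₁.le.trans hv₃, h₂ ▸ hv₄⟩⟩
    exact .inr ⟨hu₂.trans (h₂ ▸ hv₄), hv₂.trans (h₂ ▸ hu₄), (h₁.le_of_lt ha).trans_lt hb⟩
  · have ha : (hi (f u)).2 < v.2 := lt_of_not_ge fun h =>
      hv ⟨⟨h₂ ▸ hu₁, hu₂.trans h₁.le⟩, ⟨h₂ ▸ hu₃, h⟩⟩
    have hb : u.2 < (lo (f v)).2 := lt_of_not_ge fun h =>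
      hu ⟨⟨h₂ ▸ hv₁, h⟩, ⟨h₂ ▸ hv₃, h₁.le.trans hv₄⟩⟩
    exact .inl ⟨hu₁.trans (h₂ ▸ hv₃), hv₁.trans (h₂ ▸ hu₃), (h₁.le_of_lt ha).trans_lt hb⟩

theorem exists_rectBefore_rectBefore (h : IsLevelRects f lo hi) {u w : ι × κ}
    (h₁ : (hi (f u)).1 < (lo (f w)).1) (h₂ : (hi (f u)).2 < (lo (f w)).2) :
    ∃ z, (lo (f z)).2 ≤ (lo (f w)).2 ∧ RectBefore lo hi (f u) (f z) ∧
      RectBefore lo hi (f z) (f w) := by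
  set z : ι × κ := ((hi (f u)).1, (lo (f w)).2)
  obtain ⟨⟨hz₁, hz₂⟩, ⟨hz₃, hz₄⟩⟩ := h.mem z
  obtain ⟨⟨hu₁, hu₂⟩, ⟨hu₃, hu₄⟩⟩ := h.mem u
  obtain ⟨⟨hw₁, hw₂⟩, ⟨hw₃, hw₄⟩⟩ := h.mem w
  have hzu : (hi (f u)).2 < (lo (f z)).2 := lt_of_not_ge fun h' => by
    have e : f u = f z := (h.eq_of_mem (q := u) ⟨⟨hu₁.trans hu₃, hu₂.trans hu₄⟩, le_rfl⟩).symm.trans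
      (h.eq_of_mem ⟨⟨hz₁, h'⟩, ⟨hz₃, h₂.le.trans hz₄⟩⟩)
    exact h₂.not_ge (e ▸ hz₄)
  have hzw : (hi (f z)).1 < (lo (f w)).1 := lt_of_not_ge fun h' => by
    have e : f w = f z := (h.eq_of_mem (q := w) ⟨le_rfl, ⟨hw₁.trans hw₃, hw₂.trans hw₄⟩⟩).symm.trans
      (h.eq_of_mem ⟨⟨hz₁.trans h₁.le, hz₂⟩, ⟨h', hz₄⟩⟩)
    exact h₁.not_ge (e ▸ hz₁)
  exact ⟨z, hz₂, .inl ⟨(hu₁.trans hu₃).trans hz₃, hz₁, hzu⟩,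
    .inr ⟨hz₂.trans (hw₂.trans hw₄), hz₄, hzw⟩⟩

theorem bypassable (h : IsLevelRects f lo hi) :
    Bypassable (fun a b => a ∈ range f ∧ b ∈ range f ∧ RectBefore lo hi a b)
      (fun a => toLex ((lo a).2, (lo a).1)) := by
  rintro _ _ _ ⟨⟨u, rfl⟩, ⟨v, rfl⟩, hab⟩ ⟨-, ⟨w, rfl⟩, hbc⟩ hkab hkcb
  obtain ⟨⟨hu₁, hu₂⟩, ⟨hu₃, hu₄⟩⟩ := h.mem u
  obtain ⟨⟨hv₁, hv₂⟩, ⟨hv₃, hv₄⟩⟩ := h.mem v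
  obtain ⟨⟨hw₁, hw₂⟩, ⟨hw₃, hw₄⟩⟩ := h.mem w
  obtain ⟨hcb, hbc₁, hbc₂⟩ := hbc.below_of_key_le ⟨hv₁.trans hv₃, hv₂.trans hv₄⟩ hkcb
  simp only [Prod.Lex.le_iff, Prod.Lex.lt_iff, ofLex_toLex] at hkab ⊢
  have hab' : (lo (f u)).2 ≤ (lo (f v)).2 := by
    rcases hkab with h' | ⟨h', -⟩
    exacts [h'.le, h'.le]
  rcases hab with ⟨hab₁, -, hab₃⟩ | ⟨-, hab₂, hab₃⟩
  · refine ⟨.inl (by order), .inl hcb, ?_⟩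
    by_cases h₁ : (lo (f w)).1 ≤ (hi (f u)).1 <;> by_cases h₂ : (lo (f w)).2 ≤ (hi (f u)).2
    · exfalso
      set z : ι × κ := ((lo (f w)).1, max (lo (f u)).2 (lo (f w)).2)
      have hzu : f z = f u := h.eq_of_mem
        ⟨⟨by order, le_max_left _ _⟩, ⟨h₁, max_le (hu₂.trans hu₄) h₂⟩⟩
      have hzw : f z = f w := h.eq_of_mem
        ⟨⟨le_rfl, le_max_right _ _⟩, ⟨hw₁.trans hw₃, max_le (by order) (hw₂.trans hw₄)⟩⟩
      rw [← hzw, hzu] at hbc₂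
      order
    · exact .inl ⟨⟨u, rfl⟩, ⟨w, rfl⟩, .inl ⟨by order, h₁, lt_of_not_ge h₂⟩⟩
    · exact .inl ⟨⟨u, rfl⟩, ⟨w, rfl⟩, .inr ⟨by order, h₂, lt_of_not_ge h₁⟩⟩
    · obtain ⟨z, hz, hac⟩ := h.exists_rectBefore_rectBefore (lt_of_not_ge h₁) (lt_of_not_ge h₂)
      exact .inr ⟨f z, .inl (by order), ⟨⟨u, rfl⟩, ⟨z, rfl⟩, hac.1⟩, ⟨⟨z, rfl⟩, ⟨w, rfl⟩, hac.2⟩⟩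
  · refine ⟨?_, .inl hcb, .inl ⟨⟨u, rfl⟩, ⟨w, rfl⟩, .inr ⟨by order, by order, by order⟩⟩⟩
    rcases hkab with h' | ⟨h', -⟩
    exacts [.inl h', .inr ⟨h', by order⟩]

end IsLevelRects

theorem HasRectLevels.relAcyclic [WellFoundedLT ι] [WellFoundedLT κ] {f : ι × κ → α}
    (hf : HasRectLevels f) : RelAcyclic (CoverStep f) := by
  intro a ha
  obtain ⟨-, ⟨-, u, -⟩, -⟩ := TransGen.head'_iff.1 ha
  have : Nonempty (ι × κ) := ⟨u⟩
  choose lo hi hlohi using hf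
  have h : IsLevelRects f (lo ∘ Function.invFun f) (hi ∘ Function.invFun f) := fun q => by
    rw [Function.comp_apply, Function.comp_apply, ← hlohi, Function.invFun_eq (f := f) ⟨q, rfl⟩]
  exact h.bypassable.not_transGen a (TransGen.mono (fun _ _ => h.rectBefore_of_coverStep) _ _ ha)

end Grid

section Picture

variable {A : Type*}

def cellPos {m n : ℕ} (q : Fin m × Fin n) : ℕ × ℕ := ((q.1 : ℕ) + 1, (q.2 : ℕ) + 1)

theorem cellPos_injective {m n : ℕ} : Function.Injective (cellPos (m := m) (n := n)) := by
  rintro ⟨i, j⟩ ⟨i', j'⟩ h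
  simp only [cellPos, Prod.mk.injEq, add_left_inj, Fin.val_inj] at h
  rw [h.1, h.2]

theorem range_cellPos {m n : ℕ} : range (cellPos (m := m) (n := n)) = rect 1 1 m n := by
  ext ⟨i, j⟩
  constructor
  · rintro ⟨⟨i', j'⟩, h⟩
    simp only [cellPos, Prod.mk.injEq] at h
    simp only [rect, mem_ofPred_eq]
    omega
  · rintro ⟨h₁, h₂, h₃, h₄⟩
    exact ⟨(⟨i - 1, by omega⟩, ⟨j - 1, by omega⟩), by simp only [cellPos, Prod.mk.injEq]; omega⟩

theorem image_cellPos_Icc {m n : ℕ} (lo hi : Fin m × Fin n) :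
    cellPos '' Icc lo hi = rect (lo.1 + 1) (lo.2 + 1) (hi.1 + 1) (hi.2 + 1) := by
  ext ⟨i, j⟩
  constructor
  · rintro ⟨⟨i', j'⟩, ⟨⟨h₁, h₂⟩, ⟨h₃, h₄⟩⟩, h⟩
    simp only [cellPos, Prod.mk.injEq] at h
    obtain ⟨rfl, rfl⟩ := h
    simp only [rect, mem_ofPred_eq, add_le_add_iff_right, Fin.val_fin_le]
    exact ⟨h₁, h₃, h₂, h₄⟩
  · rintro ⟨h₁, h₂, h₃, h₄⟩
    refine ⟨(⟨i - 1, by omega⟩, ⟨j - 1, by omega⟩), ?_, ?_⟩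
    · simp only [mem_Icc, Prod.le_def, Fin.le_def]
      omega
    · simp only [cellPos, Prod.mk.injEq]
      omega

theorem IsHomogPartition.mem_iff_of_regionalOn {β : Type*} {m n : ℕ} {g : ℕ × ℕ → β}
    {π : Set (Set (ℕ × ℕ))} (hπ : IsHomogPartition m n g π) (hreg : RegionalOn g π)
    {d : Set (ℕ × ℕ)} (hd : d ∈ π) {q r : ℕ × ℕ} (hq : q ∈ d) (hr : r ∈ rect 1 1 m n) :
    r ∈ d ↔ g r = g q := by
  obtain ⟨-, -, hhom, hcover, -⟩ := hπ
  obtain ⟨C, hC⟩ := hhom d hd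
  refine ⟨fun h => (hC r h).trans (hC q hq).symm, fun h => ?_⟩
  rw [← hcover] at hr
  obtain ⟨d', hd', hrd'⟩ := hr
  obtain ⟨C', hC'⟩ := hhom d' hd'
  by_contra hrd
  exact hreg d' hd' d hd (fun e => hrd (e ▸ hrd')) C' C hC' hC
    ((hC' r hrd').symm.trans (h.trans (hC q hq)))

namespace Pic

def pixel (p : Pic A) (q : Fin p.rows × Fin p.cols) : A := p.val q.1 q.2

theorem bval_eq_some_pixel (p : Pic A) {q : Fin p.rows × Fin p.cols} {i j : ℕ}
    (hi : (q.1 : ℕ) + 1 = i) (hj : (q.2 : ℕ) + 1 = j) : p.bval i j = some (p.pixel q) := by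
  subst hi hj
  simp [Pic.bval, Pic.pixel]

theorem bval_cellPos (p : Pic A) (q : Fin p.rows × Fin p.cols) :
    p.bval (cellPos q).1 (cellPos q).2 = some (p.pixel q) :=
  p.bval_eq_some_pixel rfl rfl

theorem exists_pixel_of_bval_eq_some (p : Pic A) {i j : ℕ} {a : A} (h : p.bval i j = some a) :
    ∃ q : Fin p.rows × Fin p.cols, (q.1 : ℕ) + 1 = i ∧ (q.2 : ℕ) + 1 = j ∧ p.pixel q = a := by
  unfold Pic.bval at h
  split_ifs at h with hij
  exact ⟨(⟨i - 1, by omega⟩, ⟨j - 1, by omega⟩), by simp only; omega, by simp only; omega,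
    Option.some_injective _ h⟩

theorem hrel_tiles_iff (p : Pic A) {a b : A} :
    Hrel p.tiles (some a) (some b) ↔ a ≠ b ∧ ∃ u v : Fin p.rows × Fin p.cols,
      (u.2 ⋖ v.2 ∧ u.1 = v.1) ∧ p.pixel u = a ∧ p.pixel v = b := by
  simp only [Hrel, ne_eq, Option.some.injEq]
  refine and_congr_right fun _ => ⟨?_, ?_⟩
  · rintro ⟨_, ⟨i, j, -, -, rfl⟩, ⟨h₁, h₂⟩ | ⟨h₁, h₂⟩⟩ <;>
    · obtain ⟨u, hu₁, hu₂, rfl⟩ := p.exists_pixel_of_bval_eq_some h₁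
      obtain ⟨v, hv₁, hv₂, rfl⟩ := p.exists_pixel_of_bval_eq_some h₂
      exact ⟨u, v, ⟨Fin.covBy_iff.2 (Nat.covBy_iff_add_one_eq.2 (by omega)), Fin.ext (by omega)⟩,
        rfl, rfl⟩
  · rintro ⟨u, v, ⟨huv, h⟩, rfl, rfl⟩
    rw [Fin.covBy_iff, Nat.covBy_iff_add_one_eq] at huv
    exact ⟨_, ⟨u.1 + 1, u.2 + 1, u.1.2, u.2.2, rfl⟩, .inl ⟨p.bval_eq_some_pixel rfl rfl,
      p.bval_eq_some_pixel (by rw [h]) (by rw [← huv])⟩⟩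

theorem vrel_tiles_iff (p : Pic A) {a b : A} :
    Vrel p.tiles (some a) (some b) ↔ a ≠ b ∧ ∃ u v : Fin p.rows × Fin p.cols,
      (u.1 ⋖ v.1 ∧ u.2 = v.2) ∧ p.pixel u = a ∧ p.pixel v = b := by
  simp only [Vrel, ne_eq, Option.some.injEq]
  refine and_congr_right fun _ => ⟨?_, ?_⟩
  · rintro ⟨_, ⟨i, j, -, -, rfl⟩, ⟨h₁, h₂⟩ | ⟨h₁, h₂⟩⟩ <;>
    · obtain ⟨u, hu₁, hu₂, rfl⟩ := p.exists_pixel_of_bval_eq_some h₁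
      obtain ⟨v, hv₁, hv₂, rfl⟩ := p.exists_pixel_of_bval_eq_some h₂
      exact ⟨u, v, ⟨Fin.covBy_iff.2 (Nat.covBy_iff_add_one_eq.2 (by omega)), Fin.ext (by omega)⟩,
        rfl, rfl⟩
  · rintro ⟨u, v, ⟨huv, h⟩, rfl, rfl⟩
    rw [Fin.covBy_iff, Nat.covBy_iff_add_one_eq] at huv
    exact ⟨_, ⟨u.1 + 1, u.2 + 1, u.1.2, u.2.2, rfl⟩, .inl ⟨p.bval_eq_some_pixel rfl rfl,
      p.bval_eq_some_pixel (by rw [← huv]) (by rw [h])⟩⟩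

theorem arel_tiles (p : Pic A) : Arel p.tiles = CoverStep p.pixel := by
  ext a b
  rw [Arel, p.hrel_tiles_iff, p.vrel_tiles_iff, coverStep_iff]
  constructor
  · rintro (⟨hab, u, v, huv, hu, hv⟩ | ⟨hab, u, v, huv, hu, hv⟩)
    exacts [⟨hab, u, v, .inr huv, hu, hv⟩, ⟨hab, u, v, .inl huv, hu, hv⟩]
  · rintro ⟨hab, u, v, huv | huv, hu, hv⟩
    exacts [.inr ⟨hab, u, v, huv, hu, hv⟩, .inl ⟨hab, u, v, huv, hu, hv⟩]

theorem a'rel_tiles (p : Pic A) : A'rel p.tiles = CoverStep (p.pixel ∘ Prod.map id ofDual) := by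
  ext a b
  rw [A'rel, p.hrel_tiles_iff, p.vrel_tiles_iff, coverStep_comp_ofDual_iff]
  constructor
  · rintro (⟨hab, u, v, ⟨huv, h⟩, hu, hv⟩ | ⟨hab, u, v, huv, hu, hv⟩)
    exacts [⟨hab.symm, v, u, .inr ⟨huv, h.symm⟩, hv, hu⟩, ⟨hab, u, v, .inl huv, hu, hv⟩]
  · rintro ⟨hab, u, v, huv | ⟨huv, h⟩, hu, hv⟩
    exacts [.inr ⟨hab, u, v, huv, hu, hv⟩, .inl ⟨hab.symm, v, u, ⟨huv, h.symm⟩, hv, hu⟩]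

theorem hasRectLevels_of_isRegional (p : Pic A) (h : p.IsRegional) : HasRectLevels p.pixel := by
  obtain ⟨π, hπ, hreg⟩ := h
  intro q
  have hq : cellPos q ∈ ⋃₀ π := hπ.2.2.2.1 ▸ range_cellPos ▸ mem_range_self q
  obtain ⟨d, hd, hqd⟩ := hq
  obtain ⟨x, y, x', y', hx, hxx', hx', hy, hyy', hy', rfl⟩ := hπ.1 d hd
  refine ⟨(⟨x - 1, by omega⟩, ⟨y - 1, by omega⟩), (⟨x' - 1, by omega⟩, ⟨y' - 1, by omega⟩), ?_⟩
  rw [← cellPos_injective.preimage_image (Icc _ _), image_cellPos_Icc]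
  ext t
  have ht := hπ.mem_iff_of_regionalOn hreg hd hqd (range_cellPos ▸ mem_range_self t)
  simp only [bval_cellPos, Option.some.injEq] at ht
  simp only [mem_preimage, mem_singleton_iff, ← ht, Nat.sub_add_cancel hx, Nat.sub_add_cancel hy,
    Nat.sub_add_cancel (hx.trans hxx'), Nat.sub_add_cancel (hy.trans hyy')]

def levelPart (p : Pic A) (q : Fin p.rows × Fin p.cols) : Set (ℕ × ℕ) :=
  cellPos '' (p.pixel ⁻¹' {p.pixel q})

theorem levelPart_eq_of_pixel_eq (p : Pic A) {q q' : Fin p.rows × Fin p.cols}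
    (h : p.pixel q = p.pixel q') : p.levelPart q = p.levelPart q' := by
  simp only [levelPart, h]

theorem isSubdomain_levelPart (p : Pic A) (hp : HasRectLevels p.pixel)
    (q : Fin p.rows × Fin p.cols) : IsSubdomain p.rows p.cols (p.levelPart q) := by
  obtain ⟨lo, hi, h⟩ := hp q
  obtain ⟨⟨h₁, h₂⟩, ⟨h₃, h₄⟩⟩ : q ∈ Icc lo hi := h ▸ rfl
  refine ⟨lo.1 + 1, lo.2 + 1, hi.1 + 1, hi.2 + 1, le_add_self, ?_, hi.1.2, le_add_self, ?_,
    hi.2.2, by simp only [levelPart, h, image_cellPos_Icc]⟩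
  · exact Nat.succ_le_succ (Fin.le_def.1 (h₁.trans h₃))
  · exact Nat.succ_le_succ (Fin.le_def.1 (h₂.trans h₄))

theorem isRegional_of_hasRectLevels (p : Pic A) (hp : HasRectLevels p.pixel) : p.IsRegional := by
  refine ⟨range p.levelPart, ⟨?_, ?_, ?_, ?_, ?_⟩, ?_⟩
  · rintro _ ⟨q, rfl⟩
    exact p.isSubdomain_levelPart hp q
  · rintro _ ⟨q, rfl⟩
    obtain ⟨x, y, x', y', -, hxx', -, -, hyy', -, h⟩ := p.isSubdomain_levelPart hp q
    exact ⟨x, y, x', y', hxx', hyy', h⟩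
  · rintro _ ⟨q, rfl⟩
    refine ⟨some (p.pixel q), ?_⟩
    rintro _ ⟨t, ht, rfl⟩
    exact (p.bval_cellPos t).trans (congrArg some ht)
  · rw [← range_cellPos]
    ext r
    constructor
    · rintro ⟨_, ⟨q, rfl⟩, t, -, rfl⟩
      exact mem_range_self t
    · rintro ⟨t, rfl⟩
      exact ⟨_, mem_range_self t, t, rfl, rfl⟩
  · rintro _ ⟨q, rfl⟩ _ ⟨q', rfl⟩ hne
    refine eq_empty_iff_forall_notMem.2 ?_
    rintro _ ⟨⟨t, ht, rfl⟩, ⟨t', ht', he⟩⟩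
    rw [cellPos_injective he] at ht'
    exact hne (p.levelPart_eq_of_pixel_eq ((mem_singleton_iff.1 ht).symm.trans ht'))
  · rintro _ ⟨q, rfl⟩ _ ⟨q', rfl⟩ hne C₁ C₂ h₁ h₂ hC
    have e₁ := h₁ (cellPos q) ⟨q, rfl, rfl⟩
    have e₂ := h₂ (cellPos q') ⟨q', rfl, rfl⟩
    simp only [bval_cellPos] at e₁ e₂
    exact hne (p.levelPart_eq_of_pixel_eq (Option.some_injective _ (e₁.trans (hC.trans e₂.symm))))

end Pic

end Picture

/-- Let `p` be a picture and `θ = ⟦p̂⟧` the set of all tiles of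
its bordered version.  Then `p̂` is regional iff the incidence graphs of both
adjacency relations `A_θ ∩ Σ²` and `A'_θ ∩ Σ²` are acyclic. -/
theorem regional_iff_simple_regional_tileset {A : Type*} (p : Pic A) :
    p.IsRegional ↔ SimpleRegional p.tiles := by
  rw [SimpleRegional, Pic.arel_tiles, Pic.a'rel_tiles]
  constructor
  · intro hp
    have h := p.hasRectLevels_of_isRegional hp
    exact ⟨h.relAcyclic, h.comp_ofDual.relAcyclic⟩
  · exact fun h => p.isRegional_of_hasRectLevels (hasRectLevels_of_relAcyclic h.1 h.2)
end

section
/- A local picture language L is regional if and only if there exist finitely many simple regional tile sets θ₁, …, θₙ (n ≥ 1) such that L = ⋃_{1 ≤ i ≤ n} LOC(θᵢ). -/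
open Set Relation

section Acyclic

variable {α : Type*} {r s : α → α → Prop}

theorem RelAcyclic.mono (hs : RelAcyclic s) (h : ∀ a b, r a b → s a b) : RelAcyclic r :=
  fun a ha => hs a (TransGen.mono h a a ha)

theorem RelAcyclic.eq_of_reflTransGen (hr : RelAcyclic r) {a b : α}
    (hab : ReflTransGen r a b) (hba : ReflTransGen r b a) : a = b := by
  rcases reflTransGen_iff_eq_or_transGen.mp hab with h | h
  · exact h.symm
  · exact absurd (h.trans_left hba) (hr a)

theorem relAcyclic_of_sink {t : α} (ht : ∀ b, ¬ r t b) (hrs : ∀ a b, r a b → b ≠ t → s a b)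
    (hs : RelAcyclic s) : RelAcyclic r := by
  have key : ∀ {a b}, TransGen r a b → b ≠ t → TransGen s a b := by
    intro a b hab hb
    induction hab with
    | single h => exact .single (hrs _ _ h hb)
    | tail _ hcb ih => exact .tail (ih fun hc => ht _ (hc ▸ hcb)) (hrs _ _ hcb hb)
  intro a ha
  obtain ⟨c, hac, -⟩ := TransGen.head'_iff.mp ha
  exact hs a (key ha fun h => ht c (h ▸ hac))

end Acyclic

theorem exists_eq_Icc_of_uIcc_subset {α : Type*} [Lattice α] {S : Set α} (hS : S.Finite)
    (hne : S.Nonempty) (h : ∀ x ∈ S, ∀ y ∈ S, uIcc x y ⊆ S) : ∃ u v, S = Icc u v := by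
  have hne' : hS.toFinset.Nonempty := hS.toFinset_nonempty.mpr hne
  have hmem : ∀ x ∈ hS.toFinset, id x ∈ S := fun x hx => hS.mem_toFinset.mp hx
  have hinf := Finset.inf'_mem S (fun x hx y hy => h x hx y hy ⟨le_rfl, inf_le_sup⟩) _ hne' id
    hmem
  have hsup := Finset.sup'_mem S (fun x hx y hy => h x hx y hy ⟨inf_le_sup, le_rfl⟩) _ hne' id
    hmem
  refine ⟨hS.toFinset.inf' hne' id, hS.toFinset.sup' hne' id,
    Subset.antisymm (fun x hx => ⟨?_, ?_⟩) ?_⟩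
  · exact Finset.inf'_le id (hS.mem_toFinset.mpr hx)
  · exact Finset.le_sup' id (hS.mem_toFinset.mpr hx)
  · have hle := (Finset.inf'_le id hne'.choose_spec).trans (Finset.le_sup' id hne'.choose_spec)
    rw [← uIcc_of_le hle]
    exact h _ hinf _ hsup

theorem reflect_mem_uIcc {n : ℕ} {x y z : ℕ × ℕ} (hx : x.2 ≤ n) (hy : y.2 ≤ n)
    (hz : z ∈ uIcc x y) : (z.1, n - z.2) ∈ uIcc (x.1, n - x.2) (y.1, n - y.2) := by
  simp only [uIcc, mem_Icc, Prod.le_def, Prod.fst_inf, Prod.snd_inf, Prod.fst_sup,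
    Prod.snd_sup] at *
  omega

section LabelAdj

variable {A : Type*}

def LabelAdj (f : ℕ × ℕ → Option A) (a b : A) : Prop :=
  a ≠ b ∧ ∃ q : ℕ × ℕ, f q = some a ∧ (f (q.1, q.2 + 1) = some b ∨ f (q.1 + 1, q.2) = some b)

variable {f : ℕ × ℕ → Option A}

theorem LabelAdj.reflTransGen_of_le (hconn : {q | f q ≠ none}.OrdConnected) {x y : ℕ × ℕ}
    {a b : A} (hxy : x ≤ y) (hx : f x = some a) (hy : f y = some b) :
    ReflTransGen (LabelAdj f) a b := by
  suffices ∀ k (y : ℕ × ℕ) b, x ≤ y → y.1 - x.1 + (y.2 - x.2) = k → f y = some b →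
      ReflTransGen (LabelAdj f) a b from this _ y b hxy rfl hy
  intro k
  induction k with
  | zero =>
    rintro ⟨y1, y2⟩ b hxy hk hy
    obtain ⟨h1, h2⟩ := Prod.mk_le_mk.mp hxy
    obtain rfl : x = (y1, y2) := Prod.ext (by omega) (by omega)
    rw [Option.some_injective _ (hx.symm.trans hy)]
  | succ k ih =>
    rintro ⟨y1, y2⟩ b hxy hk hy
    obtain ⟨h1, h2⟩ := Prod.mk_le_mk.mp hxy
    have step : ∀ z : ℕ × ℕ, x ≤ z → z ≤ (y1, y2) →
        (y1, y2) = (z.1, z.2 + 1) ∨ (y1, y2) = (z.1 + 1, z.2) → ReflTransGen (LabelAdj f) a b := by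
      rintro ⟨z1, z2⟩ hxz hzy hnext
      obtain ⟨c, hc⟩ := Option.ne_none_iff_exists'.mp
        (hconn.out (x := x) (by simp [hx]) (y := (y1, y2)) (by simp [hy]) ⟨hxz, hzy⟩)
      obtain ⟨hz1, hz2⟩ := Prod.mk_le_mk.mp hxz
      have hac := ih _ c hxz (by simp only [Prod.mk.injEq] at hnext; omega) hc
      by_cases hcb : c = b
      · exact hcb ▸ hac
      · refine hac.tail ⟨hcb, _, hc, ?_⟩
        rcases hnext with h | h <;> rw [← h] <;> simp [hy]
    rcases Nat.lt_or_ge x.2 y2 with h | h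
    · exact step (y1, y2 - 1) (Prod.mk_le_mk.mpr ⟨h1, by omega⟩)
        (Prod.mk_le_mk.mpr ⟨le_rfl, by omega⟩) (Or.inl (by simp; omega))
    · exact step (y1 - 1, y2) (Prod.mk_le_mk.mpr ⟨by omega, h2⟩)
        (Prod.mk_le_mk.mpr ⟨by omega, le_rfl⟩) (Or.inr (by simp; omega))

theorem eq_some_of_mem_Icc (hacyc : RelAcyclic (LabelAdj f))
    (hconn : {q | f q ≠ none}.OrdConnected) {x y z : ℕ × ℕ} {a : A}
    (hx : f x = some a) (hy : f y = some a) (hz : z ∈ Icc x y) : f z = some a := by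
  obtain ⟨c, hc⟩ := Option.ne_none_iff_exists'.mp
    (hconn.out (x := x) (by simp [hx]) (y := y) (by simp [hy]) hz)
  rw [hc, hacyc.eq_of_reflTransGen (LabelAdj.reflTransGen_of_le hconn hz.1 hx hc)
    (LabelAdj.reflTransGen_of_le hconn hz.2 hc hy)]

end LabelAdj

section Peel

variable {A : Type*}

structure LabelsBoxes (f : ℕ × ℕ → Option A) (T : Finset A) (lo hi : A → ℕ × ℕ) : Prop where
  eq_some_iff : ∀ a q, f q = some a ↔ a ∈ T ∧ q ∈ Icc (lo a) (hi a)
  lo_le_hi : ∀ a ∈ T, lo a ≤ hi a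

variable {f : ℕ × ℕ → Option A} {lo hi : A → ℕ × ℕ} {T : Finset A} {t : A}

namespace LabelsBoxes

theorem eq_some (hf : LabelsBoxes f T lo hi) (ht : t ∈ T) {i j : ℕ} (h₁ : (lo t).1 ≤ i)
    (h₂ : i ≤ (hi t).1) (h₃ : (lo t).2 ≤ j) (h₄ : j ≤ (hi t).2) : f (i, j) = some t :=
  (hf.eq_some_iff t _).2 ⟨ht, Prod.mk_le_mk.mpr ⟨h₁, h₃⟩, Prod.mk_le_mk.mpr ⟨h₂, h₄⟩⟩

theorem bounds (hf : LabelsBoxes f T lo hi) {q : ℕ × ℕ} (h : f q = some t) :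
    t ∈ T ∧ (lo t).1 ≤ q.1 ∧ q.1 ≤ (hi t).1 ∧ (lo t).2 ≤ q.2 ∧ q.2 ≤ (hi t).2 := by
  obtain ⟨ht, h₁, h₂⟩ := (hf.eq_some_iff t q).1 h
  exact ⟨ht, h₁.1, h₂.1, h₁.2, h₂.2⟩

theorem lower_left_ne_none (hf : LabelsBoxes f T lo hi) (ht : t ∈ T) :
    f ((hi t).1, (lo t).2) ≠ none := by
  have := Prod.mk_le_mk.mp (hf.lo_le_hi t ht)
  simp [hf.eq_some ht this.1 le_rfl le_rfl this.2]

/-- `f ((hi t).1 + 1, (lo t).2) = none` says that no cell lies below the box of `t`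
(the occupied region being order-connected). -/
theorem exists_nothing_below (hf : LabelsBoxes f T lo hi) (hT : T.Nonempty) :
    ∃ t ∈ T, f ((hi t).1 + 1, (lo t).2) = none := by
  obtain ⟨t, ht, hmax⟩ := T.exists_max_image (fun a => (hi a).1) hT
  refine ⟨t, ht, Option.eq_none_iff_forall_ne_some.mpr fun b hb => ?_⟩
  obtain ⟨hbT, -, hb, -⟩ := hf.bounds hb
  have := hmax b hbT
  omega

theorem exists_nothing_below_of_right_neighbour (hf : LabelsBoxes f T lo hi)
    (hconn : {q | f q ≠ none}.OrdConnected) (ht : t ∈ T)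
    (hbot : f ((hi t).1 + 1, (lo t).2) = none) {r : ℕ} (hr₁ : (lo t).1 ≤ r)
    (hr₂ : r ≤ (hi t).1) (hright : f (r, (hi t).2 + 1) ≠ none) :
    ∃ c ∈ T, f ((hi c).1 + 1, (lo c).2) = none ∧ (lo t).2 < (lo c).2 := by
  classical
  obtain ⟨hlo₁, hlo₂⟩ := Prod.mk_le_mk.mp (hf.lo_le_hi t ht)
  set k := (hi t).2 + 1
  -- the lowest occupied cell of column `k` beside `t`
  set r' := Nat.findGreatest (fun r => f (r, k) ≠ none) (hi t).1
  have hr'le : r' ≤ (hi t).1 := Nat.findGreatest_le _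
  have hr'ge : r ≤ r' := Nat.le_findGreatest hr₂ hright
  have hbelow : f (r' + 1, k) = none := by
    rcases Nat.lt_or_ge r' (hi t).1 with h | h
    · exact not_not.mp (Nat.findGreatest_is_greatest (Nat.lt_succ_self r') h)
    · by_contra hne
      exact hconn.out (hf.lower_left_ne_none ht) hne ⟨Prod.mk_le_mk.mpr ⟨by omega, le_rfl⟩,
        Prod.mk_le_mk.mpr ⟨by omega, by omega⟩⟩ hbot
  obtain ⟨c, hc⟩ := Option.ne_none_iff_exists'.mp
    (Nat.findGreatest_spec (P := fun r => f (r, k) ≠ none) hr₂ hright)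
  obtain ⟨hcT, hlc₁, hhc₁, hlc₂, hhc₂⟩ := hf.bounds hc
  have hloc : (lo c).2 = k := by
    by_contra h
    have hct : c = t := Option.some_injective _ <|
      (hf.eq_some hcT hlc₁ hhc₁ (j := (hi t).2) (by omega) (by omega)).symm.trans
        (hf.eq_some ht (by omega) hr'le hlo₂ le_rfl)
    have := (hf.bounds (hct ▸ hc)).2.2.2.2
    omega
  have hhic : (hi c).1 = r' := by
    by_contra h
    simpa [hbelow] using hf.eq_some hcT (i := r' + 1) (by omega) (by omega) (by omega) hhc₂
  exact ⟨c, hcT, by rw [hhic, hloc]; exact hbelow, by omega⟩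

theorem exists_sink (hf : LabelsBoxes f T lo hi) (hconn : {q | f q ≠ none}.OrdConnected)
    (hT : T.Nonempty) : ∃ t ∈ T, ∀ b, ¬ LabelAdj f t b := by
  classical
  obtain ⟨t₀, ht₀, hbot₀⟩ := hf.exists_nothing_below hT
  -- among the boxes with nothing below them, one with rightmost left edge
  obtain ⟨t, htB, hmax⟩ := (T.filter fun a => f ((hi a).1 + 1, (lo a).2) = none).exists_max_image
    (fun a => (lo a).2) ⟨t₀, Finset.mem_filter.mpr ⟨ht₀, hbot₀⟩⟩
  obtain ⟨ht, hbot⟩ := Finset.mem_filter.mp htB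
  refine ⟨t, ht, ?_⟩
  rintro b ⟨htb, q, hq, hright | hbelow⟩ <;> obtain ⟨-, hlq₁, hqh₁, hlq₂, hqh₂⟩ := hf.bounds hq
  · have hq₂ : q.2 = (hi t).2 := by
      by_contra h
      exact htb (Option.some_injective _ <|
        (hf.eq_some ht hlq₁ hqh₁ (by omega) (by omega)).symm.trans hright)
    obtain ⟨c, hcT, hcbot, hlt⟩ := hf.exists_nothing_below_of_right_neighbour hconn ht hbot
      hlq₁ hqh₁ (by rw [← hq₂]; simp [hright])
    have := hmax c (Finset.mem_filter.mpr ⟨hcT, hcbot⟩)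
    omega
  · have hq₁ : q.1 = (hi t).1 := by
      by_contra h
      exact htb (Option.some_injective _ <|
        (hf.eq_some ht (by omega) (by omega) hlq₂ hqh₂).symm.trans hbelow)
    exact hconn.out (hf.lower_left_ne_none ht) (show f (q.1 + 1, q.2) ≠ none by simp [hbelow])
      ⟨Prod.mk_le_mk.mpr ⟨by omega, le_rfl⟩, Prod.mk_le_mk.mpr ⟨by omega, hlq₂⟩⟩ hbot

theorem eq_some_of_le_of_sink (hf : LabelsBoxes f T lo hi)
    (hconn : {q | f q ≠ none}.OrdConnected) (hsink : ∀ b, ¬ LabelAdj f t b) {y z : ℕ × ℕ}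
    (hz : f z = some t) (hzy : z ≤ y) (hy : f y ≠ none) : f y = some t := by
  obtain ⟨ht, hlz₁, hzh₁, hlz₂, hzh₂⟩ := hf.bounds hz
  obtain ⟨hzy₁, hzy₂⟩ := Prod.mk_le_mk.mp hzy
  have hleave : ∀ w w' : ℕ × ℕ, f w = some t → w ≤ w' → w' ≤ y → ¬ w' ≤ hi t →
      w' = (w.1, w.2 + 1) ∨ w' = (w.1 + 1, w.2) → False := by
    intro w w' hw hww' hw'y hout hnext
    obtain ⟨c, hc⟩ := Option.ne_none_iff_exists'.mp (hconn.out (by simp [hw]) hy ⟨hww', hw'y⟩)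
    refine hsink c ⟨fun hct => hout ((hf.eq_some_iff t w').1 (hct ▸ hc)).2.2, w, hw, ?_⟩
    rcases hnext with rfl | rfl
    exacts [Or.inl hc, Or.inr hc]
  by_contra hyt
  rcases Nat.lt_or_ge (hi t).1 y.1 with h₁ | h₁
  · exact hleave ((hi t).1, z.2) ((hi t).1 + 1, z.2) (hf.eq_some ht (by omega) le_rfl hlz₂ hzh₂)
      (Prod.mk_le_mk.mpr ⟨by omega, le_rfl⟩) (Prod.mk_le_mk.mpr ⟨h₁, hzy₂⟩)
      (fun h => by simp [Prod.le_def] at h) (Or.inr rfl)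
  · have h₂ : (hi t).2 < y.2 := by
      by_contra h₂
      exact hyt (hf.eq_some ht (by omega) h₁ (by omega) (by omega))
    exact hleave (y.1, (hi t).2) (y.1, (hi t).2 + 1)
      (hf.eq_some ht (by omega) h₁ (by omega) le_rfl) (Prod.mk_le_mk.mpr ⟨le_rfl, by omega⟩)
      (Prod.mk_le_mk.mpr ⟨le_rfl, h₂⟩) (fun h => by simp [Prod.le_def] at h) (Or.inl rfl)

end LabelsBoxes

theorem relAcyclic_labelAdj (hf : LabelsBoxes f T lo hi)
    (hconn : {q | f q ≠ none}.OrdConnected) : RelAcyclic (LabelAdj f) := by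
  classical
  induction T using Finset.strongInduction generalizing f with
  | H T ih =>
  rcases T.eq_empty_or_nonempty with rfl | hT
  · rintro a ha
    obtain ⟨-, ⟨-, q, hq, -⟩, -⟩ := TransGen.head'_iff.mp ha
    simpa using (hf.eq_some_iff a q).1 hq
  obtain ⟨t, ht, hsink⟩ := hf.exists_sink hconn hT
  set g : ℕ × ℕ → Option A := fun q => if f q = some t then none else f q
  have hg : ∀ q a, g q = some a ↔ f q = some a ∧ a ≠ t := by
    intro q a
    by_cases h : f q = some t <;> simp only [g, h, if_true, if_false]
    · simp [eq_comm]
    · exact ⟨fun h' => ⟨h', by rintro rfl; exact h h'⟩, And.left⟩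
  have hg' : ∀ q, g q ≠ none ↔ f q ≠ none ∧ f q ≠ some t := by
    intro q
    by_cases h : f q = some t <;> simp [g, h]
  have hgbox : LabelsBoxes g (T.erase t) lo hi := by
    refine ⟨fun a q => ?_, fun a ha => hf.lo_le_hi a (Finset.mem_of_mem_erase ha)⟩
    rw [hg, hf.eq_some_iff, Finset.mem_erase]
    tauto
  have hgconn : {q | g q ≠ none}.OrdConnected := by
    refine ⟨fun x hx y hy z hz => (hg' z).2 ⟨hconn.out ((hg' x).1 hx).1 ((hg' y).1 hy).1 hz, ?_⟩⟩
    exact fun hzt => ((hg' y).1 hy).2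
      (hf.eq_some_of_le_of_sink hconn hsink hzt hz.2 ((hg' y).1 hy).1)
  refine relAcyclic_of_sink hsink (s := LabelAdj g) ?_
    (ih _ (Finset.erase_ssubset ht) hgbox hgconn)
  rintro a b ⟨hab, q, hq, hnext⟩ hbt
  have hat : a ≠ t := by rintro rfl; exact hsink b ⟨hab, q, hq, hnext⟩
  refine ⟨hab, q, (hg _ _).2 ⟨hq, hat⟩, ?_⟩
  rcases hnext with h | h
  exacts [Or.inl ((hg _ _).2 ⟨h, hbt⟩), Or.inr ((hg _ _).2 ⟨h, hbt⟩)]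

end Peel

theorem relAcyclic_labelAdj_of_forall_eq_Icc {A : Type*} {f : ℕ × ℕ → Option A}
    (hcls : ∀ a, {q | f q = some a}.Nonempty → ∃ u v, {q | f q = some a} = Icc u v)
    (hfin : {q | f q ≠ none}.Finite) (hconn : {q | f q ≠ none}.OrdConnected) :
    RelAcyclic (LabelAdj f) := by
  classical
  have hcls' : ∀ a, ∃ u v, {q | f q = some a} = Icc u v := by
    intro a
    by_cases hocc : {q | f q = some a}.Nonempty
    · exact hcls a hocc
    · exact ⟨(1, 0), (0, 0), (not_nonempty_iff_eq_empty.mp hocc).trans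
        (Icc_eq_empty (by simp [Prod.le_def])).symm⟩
  choose lo hi hlohi using hcls'
  have hL : {a | ∃ q, f q = some a}.Finite := by
    refine ((hfin.image f).preimage (Option.some_injective A).injOn).subset ?_
    rintro a ⟨q, hq⟩
    exact ⟨q, by simp [hq], hq⟩
  refine relAcyclic_labelAdj (T := hL.toFinset) (lo := lo) (hi := hi) ⟨fun a q => ?_,
    fun a ha => ?_⟩ hconn
  · rw [Set.Finite.mem_toFinset, ← hlohi a]
    exact ⟨fun h => ⟨⟨q, h⟩, h⟩, And.right⟩
  · obtain ⟨q, hq⟩ := hL.mem_toFinset.mp ha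
    obtain ⟨h1, h2⟩ : q ∈ Icc (lo a) (hi a) := hlohi a ▸ hq
    exact h1.trans h2

theorem rect_eq_Icc (x y x' y' : ℕ) : rect x y x' y' = Icc (x, y) (x', y') := by
  ext q
  simp only [rect, mem_ofPred_eq, mem_Icc, Prod.le_def]
  tauto

theorem Hrel.mono {A : Type*} {θ θ' : Set (Tile A)} (h : θ ⊆ θ') {x y : Option A}
    (hxy : Hrel θ x y) : Hrel θ' x y :=
  let ⟨hne, t, ht, ht'⟩ := hxy
  ⟨hne, t, h ht, ht'⟩

theorem Vrel.mono {A : Type*} {θ θ' : Set (Tile A)} (h : θ ⊆ θ') {x y : Option A}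
    (hxy : Vrel θ x y) : Vrel θ' x y :=
  let ⟨hne, t, ht, ht'⟩ := hxy
  ⟨hne, t, h ht, ht'⟩

theorem Arel.mono {A : Type*} {θ θ' : Set (Tile A)} (h : θ ⊆ θ') {a b : A}
    (hab : Arel θ a b) : Arel θ' a b :=
  hab.imp (Hrel.mono h) (Vrel.mono h)

theorem A'rel.mono {A : Type*} {θ θ' : Set (Tile A)} (h : θ ⊆ θ') {a b : A}
    (hab : A'rel θ a b) : A'rel θ' a b :=
  hab.imp (Hrel.mono h) (Vrel.mono h)

theorem simpleRegional_empty {A : Type*} : SimpleRegional (∅ : Set (Tile A)) := by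
  have hH : ∀ x y, ¬ Hrel (∅ : Set (Tile A)) x y := fun _ _ ⟨_, _, ht, _⟩ => ht
  have hV : ∀ x y, ¬ Vrel (∅ : Set (Tile A)) x y := fun _ _ ⟨_, _, ht, _⟩ => ht
  refine ⟨fun a ha => ?_, fun a ha => ?_⟩ <;> obtain ⟨_, h | h, _⟩ := TransGen.head'_iff.mp ha
  exacts [hH _ _ h, hV _ _ h, hH _ _ h, hV _ _ h]

theorem LOC_eq_biUnion {A : Type*} (θ : Set (Tile A)) :
    LOC θ = ⋃ s ∈ insert ∅ (Pic.tiles '' LOC θ), LOC s := by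
  ext p
  simp only [biUnion_insert, biUnion_image, mem_union, mem_iUnion, exists_prop]
  constructor
  · exact fun hp => Or.inr ⟨p, hp, fun _ h => h⟩
  · rintro (hp | ⟨q, hq, hpq⟩)
    · exact absurd (hp ⟨0, 0, Nat.zero_le _, Nat.zero_le _, rfl⟩) (notMem_empty _)
    · exact fun _ h => hq (hpq h)

namespace Pic

variable {A : Type*}

def lab (p : Pic A) : ℕ × ℕ → Option A := fun q => p.bval q.1 q.2

def mirror (p : Pic A) : Pic A where
  rows := p.rows
  cols := p.cols
  rows_pos := p.rows_pos
  cols_pos := p.cols_pos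
  val i j := p.val i j.rev

variable {p : Pic A}

@[simp] theorem mirror_rows : p.mirror.rows = p.rows := rfl

@[simp] theorem mirror_cols : p.mirror.cols = p.cols := rfl

theorem bval_ne_none_iff {i j : ℕ} :
    p.bval i j ≠ none ↔ 1 ≤ i ∧ i ≤ p.rows ∧ 1 ≤ j ∧ j ≤ p.cols := by
  unfold bval
  split_ifs with h <;> simp [h]

theorem bounds_of_bval_eq_some {i j : ℕ} {a : A} (h : p.bval i j = some a) :
    1 ≤ i ∧ i ≤ p.rows ∧ 1 ≤ j ∧ j ≤ p.cols :=
  bval_ne_none_iff.mp (h ▸ Option.some_ne_none a)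

theorem setOf_lab_ne_none : {q | p.lab q ≠ none} = Icc (1, 1) (p.rows, p.cols) := by
  ext q
  simp only [mem_ofPred_eq, lab, bval_ne_none_iff, mem_Icc, Prod.le_def]
  tauto

theorem mirror_bval {i j : ℕ} (hj : j ≤ p.cols + 1) :
    p.mirror.bval i j = p.bval i (p.cols + 1 - j) := by
  unfold bval
  split_ifs with h₁ h₂ h₂
  · simp only [mirror, Option.some.injEq]
    congr 2
    ext
    simp only [Fin.val_rev]
    omega
  all_goals first | rfl | simp only [mirror_rows, mirror_cols] at *; omega

theorem mirror_lab {q : ℕ × ℕ} (hq : q.2 ≤ p.cols + 1) :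
    p.mirror.lab q = p.lab (q.1, p.cols + 1 - q.2) :=
  mirror_bval hq

theorem mirror_lab_reflect {q : ℕ × ℕ} (hq : q.2 ≤ p.cols + 1) :
    p.mirror.lab (q.1, p.cols + 1 - q.2) = p.lab q := by
  rw [mirror_lab (by simp only; omega), Nat.sub_sub_self hq]

theorem finite_setOf_lab_ne_none (p : Pic A) : {q | p.lab q ≠ none}.Finite :=
  setOf_lab_ne_none ▸ finite_Icc _ _

theorem ordConnected_setOf_lab_ne_none (p : Pic A) : {q | p.lab q ≠ none}.OrdConnected :=
  setOf_lab_ne_none ▸ ordConnected_Icc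

theorem finite_setOf_lab_eq_some (p : Pic A) (a : A) : {q | p.lab q = some a}.Finite :=
  (p.finite_setOf_lab_ne_none).subset fun q hq => by simp [show p.lab q = some a from hq]

theorem hrel_tiles_iff_s4 {a b : A} : Hrel p.tiles (some a) (some b) ↔
    a ≠ b ∧ ∃ i j, p.bval i j = some a ∧ p.bval i (j + 1) = some b := by
  constructor
  · rintro ⟨hne, _, ⟨i, j, -, -, rfl⟩, ⟨h1, h2⟩ | ⟨h1, h2⟩⟩
    exacts [⟨fun h => hne (h ▸ rfl), i, j, h1, h2⟩, ⟨fun h => hne (h ▸ rfl), i + 1, j, h1, h2⟩]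
  · rintro ⟨hne, i, j, h1, h2⟩
    have d1 := bounds_of_bval_eq_some h1
    have d2 := bounds_of_bval_eq_some h2
    exact ⟨by simpa using hne, _, ⟨i, j, d1.2.1, by omega, rfl⟩, Or.inl ⟨h1, h2⟩⟩

theorem vrel_tiles_iff_s4 {a b : A} : Vrel p.tiles (some a) (some b) ↔
    a ≠ b ∧ ∃ i j, p.bval i j = some a ∧ p.bval (i + 1) j = some b := by
  constructor
  · rintro ⟨hne, _, ⟨i, j, -, -, rfl⟩, ⟨h1, h2⟩ | ⟨h1, h2⟩⟩
    exacts [⟨fun h => hne (h ▸ rfl), i, j, h1, h2⟩, ⟨fun h => hne (h ▸ rfl), i, j + 1, h1, h2⟩]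
  · rintro ⟨hne, i, j, h1, h2⟩
    have d1 := bounds_of_bval_eq_some h1
    have d2 := bounds_of_bval_eq_some h2
    exact ⟨by simpa using hne, _, ⟨i, j, by omega, d1.2.2.2, rfl⟩, Or.inl ⟨h1, h2⟩⟩

theorem arel_tiles_iff {a b : A} : Arel p.tiles a b ↔ LabelAdj p.lab a b := by
  simp only [Arel, hrel_tiles_iff_s4, vrel_tiles_iff_s4, LabelAdj, lab, Prod.exists]
  constructor
  · rintro (⟨hne, i, j, h1, h2⟩ | ⟨hne, i, j, h1, h2⟩)
    exacts [⟨hne, i, j, h1, Or.inl h2⟩, ⟨hne, i, j, h1, Or.inr h2⟩]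
  · rintro ⟨hne, i, j, h1, h2 | h2⟩
    exacts [Or.inl ⟨hne, i, j, h1, h2⟩, Or.inr ⟨hne, i, j, h1, h2⟩]

theorem hrel_mirror_tiles_iff {a b : A} :
    Hrel p.mirror.tiles (some a) (some b) ↔ Hrel p.tiles (some b) (some a) := by
  rw [hrel_tiles_iff_s4, hrel_tiles_iff_s4, ne_comm]
  refine and_congr_right fun _ => ⟨?_, ?_⟩
  · rintro ⟨i, j, h1, h2⟩
    have hj := (bounds_of_bval_eq_some h2).2.2.2
    rw [mirror_bval (by simp at hj; omega)] at h1 h2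
    refine ⟨i, p.cols - j, ?_, ?_⟩
    · rwa [show p.cols - j = p.cols + 1 - (j + 1) by simp at hj; omega]
    · rwa [show p.cols - j + 1 = p.cols + 1 - j by simp at hj; omega]
  · rintro ⟨i, j, h1, h2⟩
    have hj := (bounds_of_bval_eq_some h2).2.2.2
    refine ⟨i, p.cols - j, ?_, ?_⟩ <;> rw [mirror_bval (by omega)]
    · rwa [show p.cols + 1 - (p.cols - j) = j + 1 by omega]
    · rwa [show p.cols + 1 - (p.cols - j + 1) = j by omega]

theorem vrel_mirror_tiles_iff {a b : A} :
    Vrel p.mirror.tiles (some a) (some b) ↔ Vrel p.tiles (some a) (some b) := by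
  rw [vrel_tiles_iff_s4, vrel_tiles_iff_s4]
  refine and_congr_right fun _ => ⟨?_, ?_⟩
  · rintro ⟨i, j, h1, h2⟩
    have hj := (bounds_of_bval_eq_some h1).2.2.2
    rw [mirror_bval (by simp at hj; omega)] at h1 h2
    exact ⟨i, _, h1, h2⟩
  · rintro ⟨i, j, h1, h2⟩
    have hj := (bounds_of_bval_eq_some h1).2.2.2
    refine ⟨i, p.cols + 1 - j, ?_, ?_⟩ <;> rw [mirror_bval (by omega), Nat.sub_sub_self (by omega)]
    exacts [h1, h2]

theorem a'rel_tiles_iff {a b : A} : A'rel p.tiles a b ↔ Arel p.mirror.tiles a b := by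
  rw [A'rel, Arel, hrel_mirror_tiles_iff, vrel_mirror_tiles_iff]

theorem IsRegional.exists_eq_Icc (hp : p.IsRegional) {a : A}
    (hocc : {q | p.lab q = some a}.Nonempty) : ∃ u v, {q | p.lab q = some a} = Icc u v := by
  obtain ⟨π, ⟨-, hrect, hhom, hcover, -⟩, hreg⟩ := hp
  have hpart : ∀ q, p.lab q ≠ none → ∃ d ∈ π, q ∈ d := by
    intro q hq
    rw [← mem_sUnion, hcover, rect_eq_Icc, ← setOf_lab_ne_none]
    exact hq
  obtain ⟨q, hq⟩ := hocc
  obtain ⟨d, hd, hqd⟩ := hpart q (Option.ne_none_iff_exists'.mpr ⟨a, hq⟩)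
  obtain ⟨x, y, x', y', -, -, rfl⟩ := hrect d hd
  obtain ⟨C, hC⟩ := hhom _ hd
  have hCa : C = some a := (hC q hqd).symm.trans hq
  refine ⟨(x, y), (x', y'), ?_⟩
  rw [← rect_eq_Icc]
  refine Subset.antisymm (fun q' hq' => ?_) (fun q' hq' => (hC q' hq').trans hCa)
  obtain ⟨d', hd', hq'd'⟩ := hpart q' (Option.ne_none_iff_exists'.mpr ⟨a, hq'⟩)
  obtain ⟨C', hC'⟩ := hhom d' hd'
  by_contra hout
  exact hreg d' hd' _ hd (fun h => hout (h ▸ hq'd')) C' C hC' hC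
    ((hC' q' hq'd').symm.trans (hq'.trans hCa.symm))

theorem isRegional_of_forall_eq_Icc
    (h : ∀ a, {q | p.lab q = some a}.Nonempty → ∃ u v, {q | p.lab q = some a} = Icc u v) :
    p.IsRegional := by
  have hlabel : ∀ a C, {q | p.lab q = some a}.Nonempty →
      Homog (fun q => p.bval q.1 q.2) {q | p.lab q = some a} C → C = some a :=
    fun a C ⟨q, hq⟩ hC => (hC q hq).symm.trans hq
  have hsub : ∀ a, {q | p.lab q = some a}.Nonempty →
      IsSubdomain p.rows p.cols {q | p.lab q = some a} := by
    intro a hne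
    obtain ⟨u, v, huv⟩ := h a hne
    rw [huv] at hne ⊢
    have huv' := nonempty_Icc.mp hne
    have hu := bounds_of_bval_eq_some ((Set.ext_iff.mp huv u).2 (left_mem_Icc.mpr huv'))
    have hv := bounds_of_bval_eq_some ((Set.ext_iff.mp huv v).2 (right_mem_Icc.mpr huv'))
    obtain ⟨h1, h2⟩ := Prod.mk_le_mk.mp huv'
    exact ⟨u.1, u.2, v.1, v.2, hu.1, h1, hv.2.1, hu.2.2.1, h2, hv.2.2.2, rect_eq_Icc .. ▸ rfl⟩
  refine ⟨{d | ∃ a, d = {q | p.lab q = some a} ∧ d.Nonempty}, ⟨?_, ?_, ?_, ?_, ?_⟩, ?_⟩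
  · rintro _ ⟨a, rfl, hne⟩
    exact hsub a hne
  · rintro _ ⟨a, rfl, hne⟩
    obtain ⟨x, y, x', y', -, h1, -, -, h2, -, hd⟩ := hsub a hne
    exact ⟨x, y, x', y', h1, h2, hd⟩
  · rintro _ ⟨a, rfl, -⟩
    exact ⟨some a, fun q hq => hq⟩
  · ext q
    rw [rect_eq_Icc, ← setOf_lab_ne_none]
    constructor
    · rintro ⟨_, ⟨a, rfl, -⟩, hq⟩
      simp [show p.lab q = some a from hq]
    · intro hq
      obtain ⟨a, ha⟩ := Option.ne_none_iff_exists'.mp hq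
      exact ⟨_, ⟨a, rfl, q, ha⟩, ha⟩
  · rintro _ ⟨a, rfl, -⟩ _ ⟨b, rfl, -⟩ hne
    refine eq_empty_of_forall_notMem fun q ⟨ha, hb⟩ => hne ?_
    rw [Option.some_injective _ ((show p.lab q = some a from ha).symm.trans hb)]
  · rintro _ ⟨a, rfl, hna⟩ _ ⟨b, rfl, hnb⟩ hne C₁ C₂ h₁ h₂
    rw [hlabel a C₁ hna h₁, hlabel b C₂ hnb h₂]
    exact fun hab => hne (by rw [Option.some_injective _ hab])

/-- Two cells carrying `a` span a box of `a`-cells: on a monotone path between them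
(read in the mirror image when they lie on an anti-diagonal) a different symbol would
close a cycle. -/
theorem uIcc_subset_of_relAcyclic (hA : RelAcyclic (LabelAdj p.lab))
    (hA' : RelAcyclic (LabelAdj p.mirror.lab)) {a : A} {x y : ℕ × ℕ}
    (hx : p.lab x = some a) (hy : p.lab y = some a) : uIcc x y ⊆ {q | p.lab q = some a} := by
  wlog hxy : x.1 ≤ y.1 generalizing x y
  · rw [uIcc_comm]
    exact this hy hx (by omega)
  intro z hz
  rcases le_total x.2 y.2 with h2 | h2
  · rw [uIcc_of_le (Prod.le_def.mpr ⟨hxy, h2⟩)] at hz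
    exact eq_some_of_mem_Icc hA (ordConnected_setOf_lab_ne_none p) hx hy hz
  · have hx2 := (bounds_of_bval_eq_some hx).2.2.2
    have hy2 := (bounds_of_bval_eq_some hy).2.2.2
    have hz' := reflect_mem_uIcc (n := p.cols + 1) (by omega) (by omega) hz
    rw [uIcc_of_le (Prod.mk_le_mk.mpr ⟨hxy, by omega⟩)] at hz'
    have hz2 : z.2 ≤ p.cols + 1 := by
      simp only [uIcc, mem_Icc, Prod.le_def, Prod.snd_sup] at hz
      omega
    rw [mem_ofPred_eq, ← mirror_lab_reflect hz2]
    exact eq_some_of_mem_Icc hA' (ordConnected_setOf_lab_ne_none _)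
      ((mirror_lab_reflect (by omega)).trans hx) ((mirror_lab_reflect (by omega)).trans hy) hz'

theorem isRegional_of_mem_LOC {θ : Set (Tile A)} (hθ : SimpleRegional θ) (hp : p ∈ LOC θ) :
    p.IsRegional := by
  have hA : RelAcyclic (LabelAdj p.lab) :=
    hθ.1.mono fun _ _ h => (arel_tiles_iff.mpr h).mono hp
  have hA' : RelAcyclic (LabelAdj p.mirror.lab) :=
    hθ.2.mono fun _ _ h => (a'rel_tiles_iff.mpr (arel_tiles_iff.mpr h)).mono hp
  exact isRegional_of_forall_eq_Icc fun a hocc =>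
    exists_eq_Icc_of_uIcc_subset (p.finite_setOf_lab_eq_some a) hocc
      fun _ hx _ hy => uIcc_subset_of_relAcyclic hA hA' hx hy

theorem IsRegional.mirror (hp : p.IsRegional) : p.mirror.IsRegional := by
  refine isRegional_of_forall_eq_Icc fun a hocc =>
    exists_eq_Icc_of_uIcc_subset (p.mirror.finite_setOf_lab_eq_some a) hocc ?_
  intro x hx y hy z hz
  have hx2 := (bounds_of_bval_eq_some (show p.mirror.lab x = some a from hx)).2.2.2
  have hy2 := (bounds_of_bval_eq_some (show p.mirror.lab y = some a from hy)).2.2.2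
  simp only [mirror_cols] at hx2 hy2
  have hz2 : z.2 ≤ p.cols + 1 := by
    simp only [uIcc, mem_Icc, Prod.le_def, Prod.snd_sup] at hz
    omega
  obtain ⟨u, v, huv⟩ := hp.exists_eq_Icc ⟨_, (mirror_lab (by omega)).symm.trans hx⟩
  have hreflect : ∀ w : ℕ × ℕ, w.2 ≤ p.cols + 1 → p.mirror.lab w = some a →
      (w.1, p.cols + 1 - w.2) ∈ Icc u v :=
    fun w hw h => huv ▸ (mirror_lab hw).symm.trans h
  have hmem := uIcc_subset_Icc (hreflect x (by omega) hx) (hreflect y (by omega) hy)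
    (reflect_mem_uIcc (by omega) (by omega) hz)
  exact (mirror_lab hz2).trans ((Set.ext_iff.mp huv _).2 hmem)

theorem IsRegional.relAcyclic_arel (hp : p.IsRegional) : RelAcyclic (Arel p.tiles) :=
  (relAcyclic_labelAdj_of_forall_eq_Icc (fun _ => hp.exists_eq_Icc)
    p.finite_setOf_lab_ne_none p.ordConnected_setOf_lab_ne_none).mono
    fun _ _ h => arel_tiles_iff.mp h

theorem IsRegional.simpleRegional_tiles (hp : p.IsRegional) : SimpleRegional p.tiles :=
  ⟨hp.relAcyclic_arel, hp.mirror.relAcyclic_arel.mono fun _ _ h => a'rel_tiles_iff.mp h⟩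

end Pic

/-- A local picture language `L = LOC(θ)` is regional (all its
pictures are regional) iff there exist finitely many simple regional tile sets
`θ₁, …, θₙ` (`n ≥ 1`) such that `L = ⋃ᵢ LOC(θᵢ)`. -/
theorem local_language_regional_iff_union_simple_regional {A : Type*}
    (θ : Set (Tile A)) (hθ : θ.Finite) :
    (∀ p ∈ LOC θ, p.IsRegional) ↔
      ∃ n : ℕ, 1 ≤ n ∧ ∃ θs : Fin n → Set (Tile A),
        (∀ i, (θs i).Finite ∧ SimpleRegional (θs i)) ∧
        LOC θ = ⋃ i, LOC (θs i) := by
  constructor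
  · intro hreg
    have hF : (insert ∅ (Pic.tiles '' LOC θ)).Finite :=
      hθ.finite_subsets.subset <|
        insert_subset (empty_subset θ) (image_subset_iff.mpr fun p hp => hp)
    obtain ⟨n, θs, hθs⟩ := hF.fin_embedding
    refine ⟨n, Nat.one_le_iff_ne_zero.mpr ?_, θs, fun i => ?_, ?_⟩
    · rintro rfl
      obtain ⟨i, -⟩ : ∅ ∈ range θs := hθs ▸ mem_insert _ _
      exact i.elim0
    · obtain h | ⟨p, hp, h⟩ := hθs ▸ mem_range_self (f := θs) i
      · exact h ▸ ⟨finite_empty, simpleRegional_empty⟩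
      · exact h ▸ ⟨hθ.subset hp, (hreg p hp).simpleRegional_tiles⟩
    · rw [LOC_eq_biUnion, ← hθs, biUnion_range]
  · rintro ⟨n, -, θs, hθs, hL⟩ p hp
    obtain ⟨i, hi⟩ := mem_iUnion.mp (hL ▸ hp)
    exact Pic.isRegional_of_mem_LOC (hθs i).2 hi
end

section
/- No context-free matrix grammar generates exactly the set of all square pictures over a one-letter alphabet: the language {a^{(n,n)} : n ≥ 1} is not a CF matrix language. Consequently the classes of CF matrix languages and grid-grammar languages are incomparable. -/
/-- Pixel access with 0-based natural-number coordinates. -/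
def Pic.get {A : Type*} (p : Pic A) (i j : ℕ) : Option A :=
  if h : i < p.rows ∧ j < p.cols then some (p.val ⟨i, h.1⟩ ⟨j, h.2⟩) else none

/-- A grid grammar with grid parameter `k`: rules `A → t` (`t` a terminal) and
`A → [B_{1,1}, …, B_{k,k}]` (a `k×k` grid of nonterminals). -/
structure GridGrammar (Sig N : Type*) (k : ℕ) where
  start : N
  termRules : Set (N × Sig)
  gridRules : Set (N × (Fin k → Fin k → N))

/-- `GridGen G A p`: the picture `p` is generated from nonterminal `A`.
A terminal rule `A → t` generates every `n×n` `t`-homogeneous square picture;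
a grid rule generates the `k×k` assembly of pictures generated by the cells,
all of the same square size `n×n`. -/
inductive GridGen {Sig N : Type*} {k : ℕ} (G : GridGrammar Sig N k) :
    N → Pic Sig → Prop
  | term {A : N} {t : Sig} (p : Pic Sig) :
      (A, t) ∈ G.termRules → p.rows = p.cols → (∀ i j, p.val i j = t) →
      GridGen G A p
  | grid {A : N} {B : Fin k → Fin k → N} (n : ℕ)
      (ps : Fin k → Fin k → Pic Sig) (q : Pic Sig) :
      (A, B) ∈ G.gridRules →
      (∀ i j, GridGen G (B i j) (ps i j)) →
      (∀ i j, (ps i j).rows = n ∧ (ps i j).cols = n) →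
      q.rows = k * n → q.cols = k * n →
      (∀ (i j : Fin k) (a b : ℕ), a < n → b < n →
        q.get ((i : ℕ) * n + a) ((j : ℕ) * n + b) = (ps i j).get a b) →
      GridGen G A q

/-- The picture language generated by a grid grammar. -/
def GridLang {Sig N : Type*} {k : ℕ} (G : GridGrammar Sig N k) :
    Set (Pic Sig) :=
  {p | GridGen G G.start p}

/-- `L` is a grid-grammar language. -/
def IsGridLang (Sig : Type) (L : Set (Pic Sig)) : Prop :=
  ∃ (N : Type) (k : ℕ), 2 ≤ k ∧ ∃ G : GridGrammar Sig N k, L = GridLang G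

/-- A context-free string grammar over terminal alphabet `T`. -/
structure CFG (T NT : Type*) where
  start : NT
  rules : Set (NT × List (T ⊕ NT))

/-- One rewriting step of a context-free string grammar. -/
inductive CFG.Step {T NT : Type*} (G : CFG T NT) :
    List (T ⊕ NT) → List (T ⊕ NT) → Prop
  | mk {A : NT} {α : List (T ⊕ NT)} (l r : List (T ⊕ NT)) :
      (A, α) ∈ G.rules → CFG.Step G (l ++ Sum.inr A :: r) (l ++ α ++ r)

/-- The string language of a context-free grammar. -/
def CFG.Lang {T NT : Type*} (G : CFG T NT) : Set (List T) :=
  {w | Relation.ReflTransGen (CFG.Step G) [Sum.inr G.start] (w.map Sum.inl)}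

/-- A context-free matrix grammar: a horizontal CF grammar `H` over the
intermediate alphabet `{A_1, …, A_k}` and vertical CF grammars `V_1, …, V_k`
over `Σ` with start symbols `A_1, …, A_k`. -/
structure MatrixGrammar (Sig : Type) where
  k : ℕ
  Nh : Type
  H : CFG (Fin k) Nh
  Nv : Fin k → Type
  V : (i : Fin k) → CFG Sig (Nv i)

/-- The picture language of a CF matrix grammar: `p ∈ L(G)` iff some
intermediate string `A_{x_1} … A_{x_n} ∈ L(H)` (`n` the number of columns of
`p`) is such that each column of `p`, read as a string, is in `L(V_{x_j})`. -/
def MGLang {Sig : Type} (G : MatrixGrammar Sig) : Set (Pic Sig) :=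
  {p | ∃ xs : List (Fin G.k), xs ∈ G.H.Lang ∧ ∃ hlen : xs.length = p.cols,
    ∀ j : Fin p.cols,
      (List.ofFn fun i => p.val i j) ∈ (G.V (xs.get (Fin.cast hlen.symm j))).Lang}

/-- `L` is a CF matrix language. -/
def IsMatrixLang (Sig : Type) (L : Set (Pic Sig)) : Prop :=
  ∃ G : MatrixGrammar Sig, MGLang G = L

/-!
Pigeonhole instead of pumping: for a matrix grammar over a one-letter alphabet, membership of the
`m × n` picture only asks for an intermediate word of length `n` in `L(H)` all of whose letters
`A_i` derive `a^m`. If every `n × n` square is generated by a word `w_n`, then, as there are only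
finitely many sets of letters, two sizes `a ≠ b` give words `w_a`, `w_b` with the same letters, and
`w_b` then generates the non-square `a × b` picture. Grid grammars only generate squares, and
the single terminal rule `S → a` already generates all of them.
-/

lemma CFG.mem_lang_of_start_rule {T NT : Type*} {G : CFG T NT} {w : List T}
    (h : (G.start, w.map Sum.inl) ∈ G.rules) : w ∈ G.Lang := by
  have step := CFG.Step.mk (G := G) [] [] h
  simp only [List.nil_append, List.append_nil] at step
  exact .single step

def unitPic (m n : ℕ) (hm : 0 < m) (hn : 0 < n) : Pic Unit :=
  ⟨m, n, hm, hn, fun _ _ => ()⟩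

lemma mem_MGLang_unit_iff {G : MatrixGrammar Unit} {p : Pic Unit} :
    p ∈ MGLang G ↔ ∃ xs ∈ G.H.Lang, xs.length = p.cols ∧
      ∀ i ∈ xs, List.replicate p.rows () ∈ (G.V i).Lang := by
  have hcol : ∀ j, (List.ofFn fun i => p.val i j) = List.replicate p.rows () :=
    fun _ => List.ofFn_const p.rows ()
  simp only [MGLang, Set.mem_ofPred_eq, hcol]
  constructor
  · rintro ⟨xs, hxs, hlen, hV⟩
    refine ⟨xs, hxs, hlen, fun i hi => ?_⟩
    obtain ⟨j, rfl⟩ := List.mem_iff_get.mp hi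
    exact hV (Fin.cast hlen j)
  · rintro ⟨xs, hxs, hlen, hV⟩
    exact ⟨xs, hxs, hlen, fun j => hV _ (List.get_mem _ _)⟩

theorem MatrixGrammar.exists_nonsquare_of_squares_subset (G : MatrixGrammar Unit)
    (h : {p : Pic Unit | p.rows = p.cols} ⊆ MGLang G) :
    ∃ p ∈ MGLang G, p.rows ≠ p.cols := by
  have hsq : ∀ n : ℕ, ∃ xs ∈ G.H.Lang, xs.length = n + 1 ∧
      ∀ i ∈ xs, List.replicate (n + 1) () ∈ (G.V i).Lang := fun n =>
    mem_MGLang_unit_iff.mp (@h (unitPic (n + 1) (n + 1) n.succ_pos n.succ_pos) rfl)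
  choose xs hxs hlen hV using hsq
  obtain ⟨a, b, hab, hletters⟩ :=
    Finite.exists_ne_map_eq_of_infinite fun n => (xs n).toFinset
  refine ⟨unitPic (a + 1) (b + 1) a.succ_pos b.succ_pos,
    mem_MGLang_unit_iff.mpr ⟨xs b, hxs b, hlen b, fun i hi => hV a i ?_⟩, by simpa [unitPic]⟩
  rw [← List.mem_toFinset, hletters, List.mem_toFinset]
  exact hi

theorem not_isMatrixLang_squares : ¬ IsMatrixLang Unit {p : Pic Unit | p.rows = p.cols} := by
  rintro ⟨G, hG⟩
  obtain ⟨p, hp, hne⟩ := G.exists_nonsquare_of_squares_subset hG.ge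
  exact hne (hG.subset hp)

lemma GridGen.rows_eq_cols {Sig N : Type*} {k : ℕ} {G : GridGrammar Sig N k}
    {A : N} {p : Pic Sig} (h : GridGen G A p) : p.rows = p.cols := by
  cases h with
  | term _ _ hsq _ => exact hsq
  | grid _ _ _ _ _ _ hr hc _ => rw [hr, hc]

lemma IsGridLang.rows_eq_cols {Sig : Type} {L : Set (Pic Sig)} (hL : IsGridLang Sig L)
    {p : Pic Sig} (hp : p ∈ L) : p.rows = p.cols := by
  obtain ⟨N, k, -, G, rfl⟩ := hL
  exact GridGen.rows_eq_cols hp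

def squaresGridGrammar : GridGrammar Unit Unit 2 := ⟨(), {((), ())}, ∅⟩

theorem isGridLang_squares : IsGridLang Unit {p : Pic Unit | p.rows = p.cols} := by
  refine ⟨Unit, 2, le_rfl, squaresGridGrammar,
    Set.ext fun p => ⟨fun hsq => ?_, GridGen.rows_eq_cols⟩⟩
  exact .term p rfl hsq fun _ _ => rfl

def dominoMatrixGrammar : MatrixGrammar Unit where
  k := 1
  Nh := Unit
  H := ⟨(), {((), [Sum.inl 0, Sum.inl 0])}⟩
  Nv := fun _ => Unit
  V := fun _ => ⟨(), {((), [Sum.inl ()])}⟩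

lemma unitPic_one_two_mem_MGLang_domino :
    unitPic 1 2 one_pos two_pos ∈ MGLang dominoMatrixGrammar :=
  mem_MGLang_unit_iff.mpr
    ⟨[⟨0, one_pos⟩, ⟨0, one_pos⟩], CFG.mem_lang_of_start_rule rfl, rfl,
      fun _ _ => CFG.mem_lang_of_start_rule rfl⟩

theorem not_isGridLang_MGLang_domino : ¬ IsGridLang Unit (MGLang dominoMatrixGrammar) :=
  fun hL => absurd (hL.rows_eq_cols unitPic_one_two_mem_MGLang_domino) (by decide)

/-- No CF matrix grammar generates exactly the set of all
square pictures over a one-letter alphabet; consequently the classes of CF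
matrix languages and grid-grammar languages are incomparable. -/
theorem squares_not_matrix_and_incomparable :
    (¬ ∃ G : MatrixGrammar Unit,
        MGLang G = {p : Pic Unit | p.rows = p.cols}) ∧
    (∃ L : Set (Pic Unit), IsMatrixLang Unit L ∧ ¬ IsGridLang Unit L) ∧
    (∃ L : Set (Pic Unit), IsGridLang Unit L ∧ ¬ IsMatrixLang Unit L) :=
  ⟨not_isMatrixLang_squares, ⟨_, ⟨dominoMatrixGrammar, rfl⟩, not_isGridLang_MGLang_domino⟩,
    ⟨_, isGridLang_squares, not_isMatrixLang_squares⟩⟩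
end

section
/- If p is a picture admitting a homogeneous partition π and some part d ∈ π is replaced by a picture s of the same size admitting a strong homogeneous partition Π(s), then π' = (π \ {d}) ∪ (Π(s) translated by the top-left corner of d) is a homogeneous partition of the resulting picture p'. -/
/-- If `p` is a picture admitting a homogeneous partition `π`
and the part `D ∈ π` is replaced by an isometric picture admitting a strong
homogeneous partition `σ` (the picture `p'` agrees with the new content on `D`
and with `p` elsewhere), then `π' = (π \ {D}) ∪ σ` is a homogeneous partition
of the resulting picture `p'`. -/
theorem substitution_homogeneous_partition {A : Type*} {m n : ℕ}
    (f g : ℕ × ℕ → A) (π σ : Set (Set (ℕ × ℕ))) (D : Set (ℕ × ℕ))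
    (hπ : IsHomogPartition m n f π) (hD : D ∈ π)
    (hagree : ∀ q, q ∉ D → g q = f q)
    (hσ : IsHomogPartitionOn D g σ) (hstrong : StrongOn g σ) :
    IsHomogPartition m n g ((π \ {D}) ∪ σ) := by
  obtain ⟨hsub, hrectπ, hhomπ, hunπ, hdisjπ⟩ := hπ
  obtain ⟨hrectσ, hhomσ, hunσ, hdisjσ⟩ := hσ
  have hσsubD : ∀ d ∈ σ, d ⊆ D := fun d hd => by
    rw [← hunσ]; exact Set.subset_sUnion_of_mem hd
  have hDdisj : ∀ e ∈ π, e ≠ D → e ∩ D = ∅ := fun e he hne => hdisjπ e he D hD hne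
  have hgf : ∀ e ∈ π, e ≠ D → ∀ q ∈ e, g q = f q := by
    intro e he hne q hq
    apply hagree
    intro hqD
    have h : q ∈ e ∩ D := ⟨hq, hqD⟩
    rw [hDdisj e he hne] at h
    exact h
  constructor
  · rintro d (⟨hd, -⟩ | hd)
    · exact hsub d hd
    · obtain ⟨x, y, x', y', hx, hy, rfl⟩ := hrectσ d hd
      obtain ⟨a, b, a', b', ha1, haa, ham, hb1, hbb, hbn, hDeq⟩ := hsub D hD
      have h1 : ((x, y) : ℕ × ℕ) ∈ rect x y x' y' := ⟨le_refl x, hx, le_refl y, hy⟩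
      have h2 : ((x', y') : ℕ × ℕ) ∈ rect x y x' y' := ⟨hx, le_refl x', hy, le_refl y'⟩
      have h1D := hσsubD _ hd h1
      have h2D := hσsubD _ hd h2
      rw [hDeq] at h1D h2D
      exact ⟨x, y, x', y', ha1.trans h1D.1, hx, h2D.2.1.trans ham,
        hb1.trans h1D.2.2.1, hy, h2D.2.2.2.trans hbn, rfl⟩
  refine ⟨?_, ?_, ?_, ?_⟩
  · rintro d (⟨hd, -⟩ | hd)
    · exact hrectπ d hd
    · exact hrectσ d hd
  · rintro d (⟨hd, hdne⟩ | hd)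
    · obtain ⟨C, hC⟩ := hhomπ d hd
      exact ⟨C, fun q hq => (hgf d hd (fun h => hdne h) q hq).trans (hC q hq)⟩
    · exact hhomσ d hd
  · rw [Set.sUnion_union, hunσ, ← hunπ]
    ext q
    simp only [Set.mem_union, Set.mem_sUnion, Set.mem_diff, Set.mem_singleton_iff]
    constructor
    · rintro (⟨t, ⟨ht, -⟩, hq⟩ | hq)
      · exact ⟨t, ht, hq⟩
      · exact ⟨D, hD, hq⟩
    · rintro ⟨t, ht, hq⟩
      by_cases h : t = D
      · exact Or.inr (h ▸ hq)
      · exact Or.inl ⟨t, ⟨ht, h⟩, hq⟩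
  · rintro d (⟨hd, hdne⟩ | hd) e (⟨he, hene⟩ | he) hne
    · exact hdisjπ d hd e he hne
    · apply Set.eq_empty_of_subset_empty
      intro q hq
      have h : q ∈ d ∩ D := ⟨hq.1, hσsubD e he hq.2⟩
      rw [hDdisj d hd (fun h => hdne h)] at h
      exact h
    · apply Set.eq_empty_of_subset_empty
      intro q hq
      have h : q ∈ e ∩ D := ⟨hq.2, hσsubD d hd hq.1⟩
      rw [hDdisj e he (fun h => hene h)] at h
      exact h
    · exact hdisjσ d hd e he hne
end
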